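/- arXiv:2103.00905 — 2 statements merged into one kernel-verified Lean document; each statement's English description precedes it below -/
import Mathlib

section
/- Let Q̄ be a probability measure on (Ω̄,F̄) absolutely continuous with respect to P̄, with decomposition Q̄=Q⊗ψ, i.e., Ē^{Q̄}[X]=E^{Q}[∑_{t∈𝕋}ψ_t X_t] for all X∈L̄^∞(ℝ), where Q is absolutely continuous with respect to P and ψ∈Ψ(P). Then for every t∈𝕋: Q̄=P̄ on F̄_t if and only if Q=P on F_t and ψ_s=μ_s P-a.s. for every s<t. -/
open MeasureTheory Finset Pointwise Filter

noncomputable section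

namespace RMPaper

variable {Ω : Type*}

/-- The space `L^∞(m; ℝ^d)` of bounded `m`-measurable `ℝ^d`-valued random vectors
(identified with its set of representatives). -/
def Linf (m : MeasurableSpace Ω) (d : ℕ) : Set (Ω → Fin d → ℝ) :=
  {X | Measurable[m] X ∧ ∃ C : ℝ, ∀ ω i, |X ω i| ≤ C}

/-- Membership in the subspace of eligible assets `M = ℝ^md × {0}^(d-md)`. -/
def inM (d md : ℕ) (x : Fin d → ℝ) : Prop := ∀ i : Fin d, md ≤ (i : ℕ) → x i = 0

/-- The space `M_t = L^∞_t(M)` of eligible portfolios. -/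
def Msp {m0 : MeasurableSpace Ω} (m : MeasurableSpace Ω) (P : @Measure Ω m0) (d md : ℕ) :
    Set (Ω → Fin d → ℝ) :=
  {X | X ∈ Linf m d ∧ ∀ᵐ ω ∂P, inM d md (X ω)}

/-- The cone `M_{t,+}` of nonnegative eligible portfolios. -/
def MspP {m0 : MeasurableSpace Ω} (m : MeasurableSpace Ω) (P : @Measure Ω m0) (d md : ℕ) :
    Set (Ω → Fin d → ℝ) :=
  {X | X ∈ Msp m P d md ∧ ∀ᵐ ω ∂P, ∀ i, 0 ≤ X ω i}

/-- The space `L^1_t(ℝ^d)`. -/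
def L1t {m0 : MeasurableSpace Ω} (m : MeasurableSpace Ω) (P : @Measure Ω m0) (d : ℕ) :
    Set (Ω → Fin d → ℝ) :=
  {Y | Measurable[m] Y ∧ ∀ i, Integrable (fun ω => Y ω i) P}

/-- The weak* topology `σ(L^∞_t, L^1_t)`, defined as the topology induced by all
pairings with elements of `L^1_t`. -/
def wStar {m0 : MeasurableSpace Ω} (m : MeasurableSpace Ω) (P : @Measure Ω m0) (d : ℕ) :
    TopologicalSpace (Ω → Fin d → ℝ) :=
  TopologicalSpace.induced
    (fun X => fun Y : ↥(L1t m P d) => ∫ ω, ∑ i, Y.1 ω i * X ω i ∂P) Pi.topologicalSpace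

/-- `S` is closed in the subspace topology (induced by `τ`) on `A`. -/
def IsClosedIn {β : Type*} (τ : TopologicalSpace β) (A S : Set β) : Prop :=
  @closure β τ S ∩ A ⊆ S

/-- `F_t`-decomposability of a set of random vectors. -/
def Decomp (m : MeasurableSpace Ω) {d : ℕ} (S : Set (Ω → Fin d → ℝ)) : Prop :=
  ∀ A : Set Ω, MeasurableSet[m] A → ∀ u ∈ S, ∀ v ∈ S,
    (A.indicator u + Aᶜ.indicator v) ∈ S

/-- Finiteness at zero of a conditional risk measure: the value at `0` is nonempty, closed
(w.r.t. the subspace topology on `M_t`), `F_t`-decomposable, and generated by a measurable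
random set `R₀` with `P[R₀ = M] = 0`. -/
def FinAtZero {m0 : MeasurableSpace Ω} (m : MeasurableSpace Ω) (P : @Measure Ω m0) (d md : ℕ)
    (S : Set (Ω → Fin d → ℝ)) : Prop :=
  S.Nonempty ∧ IsClosedIn (wStar m P d) (Msp m P d md) S ∧ Decomp m S ∧
    ∃ R0 : Ω → Set (Fin d → ℝ),
      MeasurableSet[m.prod inferInstance] {p : Ω × (Fin d → ℝ) | p.2 ∈ R0 p.1} ∧
      S = {u | u ∈ Linf m d ∧ ∀ᵐ ω ∂P, u ω ∈ R0 ω} ∧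
      P {ω | R0 ω = {x | inM d md x}} = 0

/-- A set-valued conditional risk measure for vectors with domain `L^∞(mDom; ℝ^d)` and
values that are upper subsets of `M_t ⊆ L^∞(mVal; ℝ^d)`: cash invariance, monotonicity, and
finiteness at zero. -/
def IsCRMv {m0 : MeasurableSpace Ω} (mDom mVal : MeasurableSpace Ω) (P : @Measure Ω m0)
    (d md : ℕ) (R : (Ω → Fin d → ℝ) → Set (Ω → Fin d → ℝ)) : Prop :=
  (∀ X ∈ Linf mDom d, R X ⊆ Msp mVal P d md ∧ R X + MspP mVal P d md = R X) ∧
  (∀ X ∈ Linf mDom d, ∀ mm ∈ Msp mVal P d md, R (X + mm) = (fun u => u - mm) '' R X) ∧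
  (∀ X ∈ Linf mDom d, ∀ Y ∈ Linf mDom d, (∀ᵐ ω ∂P, ∀ i, X ω i ≤ Y ω i) → R X ⊆ R Y) ∧
  FinAtZero mVal P d md (R 0)

/-- The space `R^{∞,d}_t` of adapted, uniformly bounded processes starting at time `t`. -/
def procSp (T : ℕ) (F : Fin (T+1) → MeasurableSpace Ω) (d : ℕ) (t : Fin (T+1)) :
    Set (Fin (T+1) → Ω → Fin d → ℝ) :=
  {X | (∀ s, Measurable[F s] (X s)) ∧ (∃ C : ℝ, ∀ s ω i, |X s ω i| ≤ C) ∧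
    ∀ s, s < t → X s = 0}

/-- A set-valued conditional risk measure for processes at time `t`. -/
def IsCRMp {m0 : MeasurableSpace Ω} (T : ℕ) (F : Fin (T+1) → MeasurableSpace Ω)
    (P : @Measure Ω m0) (d md : ℕ) (t : Fin (T+1))
    (ρ : (Fin (T+1) → Ω → Fin d → ℝ) → Set (Ω → Fin d → ℝ)) : Prop :=
  (∀ X ∈ procSp T F d t, ρ X ⊆ Msp (F t) P d md ∧ ρ X + MspP (F t) P d md = ρ X) ∧
  (∀ X ∈ procSp T F d t, ∀ mm ∈ Msp (F t) P d md,
    ρ (fun s ω i => X s ω i + (if t ≤ s then mm ω i else 0)) = (fun u => u - mm) '' ρ X) ∧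
  (∀ X ∈ procSp T F d t, ∀ Y ∈ procSp T F d t,
    (∀ᵐ ω ∂P, ∀ s i, X s ω i ≤ Y s ω i) → ρ X ⊆ ρ Y) ∧
  FinAtZero (F t) P d md (ρ 0)

/-- Normalization of a set-valued risk measure. -/
def NormalizedOn {β γ : Type*} [Zero β] [Add γ] (D : Set β) (R : β → Set γ) : Prop :=
  ∀ X ∈ D, R X = R X + R 0

/-- Conditional scaling of a random vector. -/
def scal {d : ℕ} (lam : Ω → ℝ) (u : Ω → Fin d → ℝ) : Ω → Fin d → ℝ := fun ω i => lam ω * u ω i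

/-- Conditional convexity of a risk measure for vectors. -/
def CondConvexV {m0 : MeasurableSpace Ω} (mDom mVal : MeasurableSpace Ω) (P : @Measure Ω m0)
    (d : ℕ) (R : (Ω → Fin d → ℝ) → Set (Ω → Fin d → ℝ)) : Prop :=
  ∀ X ∈ Linf mDom d, ∀ Y ∈ Linf mDom d, ∀ lam : Ω → ℝ,
    Measurable[mVal] lam → (∀ᵐ ω ∂P, lam ω ∈ Set.Icc (0:ℝ) 1) →
    scal lam '' R X + scal (fun ω => 1 - lam ω) '' R Y ⊆
      R (fun ω i => lam ω * X ω i + (1 - lam ω) * Y ω i)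

/-- Conditional positive homogeneity of a risk measure for vectors. -/
def CondPosHomV {m0 : MeasurableSpace Ω} (mDom mVal : MeasurableSpace Ω) (P : @Measure Ω m0)
    (d : ℕ) (R : (Ω → Fin d → ℝ) → Set (Ω → Fin d → ℝ)) : Prop :=
  ∀ X ∈ Linf mDom d, ∀ lam : Ω → ℝ,
    Measurable[mVal] lam → (∃ C : ℝ, ∀ ω, |lam ω| ≤ C) → (∀ᵐ ω ∂P, 0 < lam ω) →
    R (scal lam X) = scal lam '' R X

/-- Conditional convexity of a risk measure for processes. -/
def CondConvexP {m0 : MeasurableSpace Ω} (T : ℕ) (F : Fin (T+1) → MeasurableSpace Ω)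
    (P : @Measure Ω m0) (d : ℕ) (t : Fin (T+1))
    (ρ : (Fin (T+1) → Ω → Fin d → ℝ) → Set (Ω → Fin d → ℝ)) : Prop :=
  ∀ X ∈ procSp T F d t, ∀ Y ∈ procSp T F d t, ∀ lam : Ω → ℝ,
    Measurable[F t] lam → (∀ᵐ ω ∂P, lam ω ∈ Set.Icc (0:ℝ) 1) →
    scal lam '' ρ X + scal (fun ω => 1 - lam ω) '' ρ Y ⊆
      ρ (fun s ω i => lam ω * X s ω i + (1 - lam ω) * Y s ω i)

/-- Conditional positive homogeneity of a risk measure for processes. -/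
def CondPosHomP {m0 : MeasurableSpace Ω} (T : ℕ) (F : Fin (T+1) → MeasurableSpace Ω)
    (P : @Measure Ω m0) (d : ℕ) (t : Fin (T+1))
    (ρ : (Fin (T+1) → Ω → Fin d → ℝ) → Set (Ω → Fin d → ℝ)) : Prop :=
  ∀ X ∈ procSp T F d t, ∀ lam : Ω → ℝ,
    Measurable[F t] lam → (∃ C : ℝ, ∀ ω, |lam ω| ≤ C) → (∀ᵐ ω ∂P, 0 < lam ω) →
    ρ (fun s ω i => lam ω * X s ω i) = scal lam '' ρ X

/-! ### The optional filtration -/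

/-- The optional σ-algebra `F̄` on `Ω̄ = Ω × 𝕋`, generated by the sets `A × {t}`, `A ∈ F_t`. -/
def optSigma (T : ℕ) (F : Fin (T+1) → MeasurableSpace Ω) :
    MeasurableSpace (Ω × Fin (T+1)) :=
  MeasurableSpace.generateFrom
    {S | ∃ t : Fin (T+1), ∃ A : Set Ω, MeasurableSet[F t] A ∧ S = A ×ˢ ({t} : Set (Fin (T+1)))}

/-- The optional filtration `F̄_t` on `Ω̄ = Ω × 𝕋`. -/
def optFilt (T : ℕ) (F : Fin (T+1) → MeasurableSpace Ω) (t : Fin (T+1)) :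
    MeasurableSpace (Ω × Fin (T+1)) :=
  MeasurableSpace.generateFrom
    {S | (∃ r : Fin (T+1), r < t ∧ ∃ A : Set Ω, MeasurableSet[F r] A ∧
            S = A ×ˢ ({r} : Set (Fin (T+1)))) ∨
         (∃ A : Set Ω, MeasurableSet[F t] A ∧ S = A ×ˢ (Set.Ici t))}

/-- The reference measure `P̄ = P ⊗ μ` on the optional σ-algebra, determined by
`Ē[X] = E[∑_t μ_t X_t]`. -/
def optMeas {m0 : MeasurableSpace Ω} (T : ℕ) (F : Fin (T+1) → MeasurableSpace Ω)
    (P : @Measure Ω m0) (μ : Fin (T+1) → Ω → ℝ) : @Measure (Ω × Fin (T+1)) (optSigma T F) :=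
  ∑ t : Fin (T+1),
    @Measure.map Ω (Ω × Fin (T+1)) m0 (optSigma T F) (fun ω => (ω, t))
      (P.withDensity fun ω => ENNReal.ofReal (μ t ω))

/-! ### Embeddings between the base space and the optional space -/

/-- `v ↦ v 1_{{s}}` embedding a random vector at time `s`. -/
def embAt (T : ℕ) {d : ℕ} (s : Fin (T+1)) (v : Ω → Fin d → ℝ) :
    Ω × Fin (T+1) → Fin d → ℝ :=
  fun x i => if x.2 = s then v x.1 i else 0

/-- `u ↦ u 1_{𝕋_t}` embedding a random vector from time `t` onwards. -/
def embTail (T : ℕ) {d : ℕ} (t : Fin (T+1)) (u : Ω → Fin d → ℝ) :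
    Ω × Fin (T+1) → Fin d → ℝ :=
  fun x i => if t ≤ x.2 then u x.1 i else 0

/-- `Y ↦ Y 1_{𝕋_t}` embedding a process into `L̄^∞`. -/
def embProc (T : ℕ) {d : ℕ} (t : Fin (T+1)) (Y : Fin (T+1) → Ω → Fin d → ℝ) :
    Ω × Fin (T+1) → Fin d → ℝ :=
  fun x i => if t ≤ x.2 then Y x.2 x.1 i else 0

/-- `π_{t,T}(X)`, the process associated with `X ∈ L̄^∞`. -/
def procOf (T : ℕ) {d : ℕ} (t : Fin (T+1)) (X : Ω × Fin (T+1) → Fin d → ℝ) :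
    Fin (T+1) → Ω → Fin d → ℝ :=
  fun s ω i => if t ≤ s then X (ω, s) i else 0

/-- `X ↦ X 1_{{s}}` on the optional space. -/
def cutAt (T : ℕ) {d : ℕ} (s : Fin (T+1)) (X : Ω × Fin (T+1) → Fin d → ℝ) :
    Ω × Fin (T+1) → Fin d → ℝ :=
  fun x i => if x.2 = s then X x i else 0

/-- `X ↦ X 1_{𝕋_t}` on the optional space. -/
def cutTail (T : ℕ) {d : ℕ} (t : Fin (T+1)) (X : Ω × Fin (T+1) → Fin d → ℝ) :
    Ω × Fin (T+1) → Fin d → ℝ :=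
  fun x i => if t ≤ x.2 then X x i else 0

/-- Evaluation `u ↦ u_s` of an optional random vector at time `s`. -/
def evalAt (T : ℕ) {d : ℕ} (s : Fin (T+1)) (u : Ω × Fin (T+1) → Fin d → ℝ) : Ω → Fin d → ℝ :=
  fun ω => u (ω, s)

/-- Time decomposability of a conditional risk measure on the optional space:
`R̄_t(X) = ∑_{s<t} R̄_t(X 1_{{s}}) 1_{{s}} + R̄_t(X 1_{𝕋_t}) 1_{𝕋_t}`. -/
def TimeDecomp (T : ℕ) (F : Fin (T+1) → MeasurableSpace Ω) {d : ℕ} (t : Fin (T+1))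
    (R : (Ω × Fin (T+1) → Fin d → ℝ) → Set (Ω × Fin (T+1) → Fin d → ℝ)) : Prop :=
  ∀ X ∈ Linf (optSigma T F) d,
    R X = (∑ s ∈ Iio t, (cutAt T s) '' R (cutAt T s X)) + (cutTail T t) '' R (cutTail T t X)

/-- The risk measure `R̄_t := ∑_{s<t} R_s((·)_s) 1_{{s}} + ρ_t(π_{t,T}(·)) 1_{𝕋_t}` on the
optional space built from a risk measure for processes and a family of risk measures for
vectors. -/
def buildBar (T : ℕ) {d : ℕ} (t : Fin (T+1))
    (R : Fin (T+1) → (Ω → Fin d → ℝ) → Set (Ω → Fin d → ℝ))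
    (ρ : (Fin (T+1) → Ω → Fin d → ℝ) → Set (Ω → Fin d → ℝ)) :
    (Ω × Fin (T+1) → Fin d → ℝ) → Set (Ω × Fin (T+1) → Fin d → ℝ) :=
  fun X => (∑ s ∈ Iio t, (embAt T s) '' R s (evalAt T s X)) +
    (embTail T t) '' ρ (procOf T t X)

/-- `ρ_t(Y) := R̄_t(Y 1_{𝕋_t})_t`, the risk measure for processes induced by a risk measure
on the optional space. -/
def barToProc (T : ℕ) {d : ℕ} (t : Fin (T+1))
    (Rb : (Ω × Fin (T+1) → Fin d → ℝ) → Set (Ω × Fin (T+1) → Fin d → ℝ)) :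
    (Fin (T+1) → Ω → Fin d → ℝ) → Set (Ω → Fin d → ℝ) :=
  fun Y => evalAt T t '' Rb (embProc T t Y)

/-- `R_s(Z) := R̄_t(Z 1_{{s}})_s`, the restricted risk measures for vectors induced by a risk
measure on the optional space. -/
def barToVec (T : ℕ) {d : ℕ} (t s : Fin (T+1))
    (Rb : (Ω × Fin (T+1) → Fin d → ℝ) → Set (Ω × Fin (T+1) → Fin d → ℝ)) :
    (Ω → Fin d → ℝ) → Set (Ω → Fin d → ℝ) :=
  fun Z => evalAt T s '' Rb (embAt T s Z)

/-! ### Acceptance sets -/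

/-- The acceptance set of a risk measure for vectors. -/
def accV {d : ℕ} {α : Type*} (D : Set (α → Fin d → ℝ))
    (R : (α → Fin d → ℝ) → Set (α → Fin d → ℝ)) : Set (α → Fin d → ℝ) :=
  {X | X ∈ D ∧ 0 ∈ R X}

/-- The acceptance set of a risk measure for processes. -/
def accP (T : ℕ) (F : Fin (T+1) → MeasurableSpace Ω) (d : ℕ) (t : Fin (T+1))
    (ρ : (Fin (T+1) → Ω → Fin d → ℝ) → Set (Ω → Fin d → ℝ)) :
    Set (Fin (T+1) → Ω → Fin d → ℝ) :=
  {X | X ∈ procSp T F d t ∧ 0 ∈ ρ X}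

/-! ### Multiportfolio time consistency -/

/-- Multiportfolio time consistency for a dynamic risk measure for processes. -/
def MPTCp (T : ℕ) (F : Fin (T+1) → MeasurableSpace Ω) (d : ℕ)
    (ρ : Fin (T+1) → (Fin (T+1) → Ω → Fin d → ℝ) → Set (Ω → Fin d → ℝ)) : Prop :=
  ∀ t s : Fin (T+1), t < s →
    ∀ X ∈ procSp T F d s, ∀ Z ∈ procSp T F d t, ∀ B ⊆ procSp T F d s,
      ρ s X ⊆ (⋃ Y ∈ B, ρ s Y) →
      ρ t (fun r ω i => (if t ≤ r ∧ r < s then Z r ω i else 0) +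
            (if s ≤ r then X r ω i else 0)) ⊆
        ⋃ Y ∈ B, ρ t (fun r ω i => (if t ≤ r ∧ r < s then Z r ω i else 0) +
            (if s ≤ r then Y r ω i else 0))

/-- The set `B = {(b_0,…,b_{s-1},b_s) : b_r ∈ B_r (r<s), b_s ∈ B_s}` of optional random
vectors, where a tuple denotes `∑_{r<s} b_r 1_{{r}} + b_s 1_{𝕋_s}`. -/
def tupleSet (T : ℕ) {d : ℕ} (s : Fin (T+1))
    (Br : Fin (T+1) → Set (Ω → Fin d → ℝ)) (Bs : Set (Fin (T+1) → Ω → Fin d → ℝ)) :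
    Set (Ω × Fin (T+1) → Fin d → ℝ) :=
  {Yb | ∃ b : Fin (T+1) → Ω → Fin d → ℝ, ∃ bs ∈ Bs, (∀ r, r < s → b r ∈ Br r) ∧
    Yb = fun x i => (if x.2 < s then b x.2 x.1 i else 0) + (if s ≤ x.2 then bs x.2 x.1 i else 0)}

/-- Multiportfolio time consistency for a dynamic risk measure for vectors on the optional
filtration. -/
def MPTCv (T : ℕ) (F : Fin (T+1) → MeasurableSpace Ω) {d : ℕ}
    (Rb : Fin (T+1) → (Ω × Fin (T+1) → Fin d → ℝ) → Set (Ω × Fin (T+1) → Fin d → ℝ)) :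
    Prop :=
  ∀ t s : Fin (T+1), t < s → ∀ X ∈ Linf (optSigma T F) d,
    ∀ Br : Fin (T+1) → Set (Ω → Fin d → ℝ), (∀ r, r < s → Br r ⊆ Linf (F r) d) →
    ∀ Bs ⊆ procSp T F d s,
      Rb s X ⊆ (⋃ Y ∈ tupleSet T s Br Bs, Rb s Y) →
      Rb t X ⊆ ⋃ Y ∈ tupleSet T s Br Bs, Rb t Y

/-- Joint multiportfolio time consistency of the pair `(ρ_t, (R^t_s)_{s<t})_{t∈𝕋}`. -/
def JointMPTC (T : ℕ) (F : Fin (T+1) → MeasurableSpace Ω) (d : ℕ)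
    (ρ : Fin (T+1) → (Fin (T+1) → Ω → Fin d → ℝ) → Set (Ω → Fin d → ℝ))
    (R : Fin (T+1) → Fin (T+1) → (Ω → Fin d → ℝ) → Set (Ω → Fin d → ℝ)) : Prop :=
  MPTCp T F d ρ ∧
  (∀ t s : Fin (T+1), t < s →
    ∀ Xr : Fin (T+1) → Ω → Fin d → ℝ, (∀ r, t ≤ r → r < s → Xr r ∈ Linf (F r) d) →
    ∀ Br : Fin (T+1) → Set (Ω → Fin d → ℝ), (∀ r, t ≤ r → r < s → Br r ⊆ Linf (F r) d) →
    ∀ Z ∈ procSp T F d s,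
      (∀ r, t ≤ r → r < s → R s r (Xr r) ⊆ ⋃ Y ∈ Br r, R s r Y) →
      ρ t (fun r ω i => (if t ≤ r ∧ r < s then Xr r ω i else 0) +
            (if s ≤ r then Z r ω i else 0)) ⊆
        ⋃ (Yr : Fin (T+1) → Ω → Fin d → ℝ) (_ : ∀ r, t ≤ r → r < s → Yr r ∈ Br r),
          ρ t (fun r ω i => (if t ≤ r ∧ r < s then Yr r ω i else 0) +
            (if s ≤ r then Z r ω i else 0))) ∧
  (∀ r t s : Fin (T+1), r < t → t < s → ∀ X ∈ Linf (F r) d, ∀ B ⊆ Linf (F r) d,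
    R s r X ⊆ (⋃ Y ∈ B, R s r Y) → R t r X ⊆ ⋃ Y ∈ B, R t r Y)

/-! ### Closedness and upper continuity -/

/-- The increments `Δa_s = a_s - a_{s-1}` (with `a_{-1} = 0`) of a process. -/
def dlt (T : ℕ) {d : ℕ} (a : Fin (T+1) → Ω → Fin d → ℝ) (s : Fin (T+1)) : Ω → Fin d → ℝ :=
  fun ω i => a s ω i - (if s = 0 then 0 else a (s - 1) ω i)

/-- The space `A^{1,d}_t` of adapted processes supported on `𝕋_t` with integrable total
variation. -/
def A1t {m0 : MeasurableSpace Ω} (T : ℕ) (F : Fin (T+1) → MeasurableSpace Ω)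
    (P : @Measure Ω m0) (d : ℕ) (t : Fin (T+1)) : Set (Fin (T+1) → Ω → Fin d → ℝ) :=
  {a | (∀ s, Measurable[F s] (a s)) ∧ (∀ s, s < t → a s = 0) ∧
    ∀ s i, Integrable (fun ω => dlt T a s ω i) P}

/-- The topology `σ(R^{∞,d}_t, A^{1,d}_t)` on the space of processes. -/
def procTop {m0 : MeasurableSpace Ω} (T : ℕ) (F : Fin (T+1) → MeasurableSpace Ω)
    (P : @Measure Ω m0) (d : ℕ) (t : Fin (T+1)) :
    TopologicalSpace (Fin (T+1) → Ω → Fin d → ℝ) :=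
  TopologicalSpace.induced
    (fun X => fun a : ↥(A1t T F P d t) =>
      ∫ ω, ∑ s ∈ Ici t, ∑ i, dlt T a.1 s ω i * X s ω i ∂P) Pi.topologicalSpace

/-- Closedness of the graph of a risk measure for processes in the product of
`σ(R^{∞,d}_t, A^{1,d}_t)` and the weak* topology. -/
def ClosedGraphP {m0 : MeasurableSpace Ω} (T : ℕ) (F : Fin (T+1) → MeasurableSpace Ω)
    (P : @Measure Ω m0) (d md : ℕ) (t : Fin (T+1))
    (ρ : (Fin (T+1) → Ω → Fin d → ℝ) → Set (Ω → Fin d → ℝ)) : Prop :=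
  IsClosedIn (@instTopologicalSpaceProd _ _ (procTop T F P d t) (wStar (F t) P d))
    (procSp T F d t ×ˢ Msp (F t) P d md)
    {p | p.1 ∈ procSp T F d t ∧ p.2 ∈ ρ p.1}

/-- Closedness of the graph of a risk measure for vectors in the product of the weak*
topologies. -/
def ClosedGraphV {m0 : MeasurableSpace Ω} (mDom mVal : MeasurableSpace Ω)
    (P : @Measure Ω m0) (d md : ℕ)
    (R : (Ω → Fin d → ℝ) → Set (Ω → Fin d → ℝ)) : Prop :=
  IsClosedIn (@instTopologicalSpaceProd _ _ (wStar mDom P d) (wStar mVal P d))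
    (Linf mDom d ×ˢ Msp mVal P d md)
    {p | p.1 ∈ Linf mDom d ∧ p.2 ∈ R p.1}

/-- The family `G(M_t; M_{t,+}) = {D ⊆ M_t : D = cl co (D + M_{t,+})}` of closed convex
upper subsets of `M_t`. -/
def Gsp {m0 : MeasurableSpace Ω} (m : MeasurableSpace Ω) (P : @Measure Ω m0) (d md : ℕ) :
    Set (Set (Ω → Fin d → ℝ)) :=
  {D | D ⊆ Msp m P d md ∧
    D = @closure _ (wStar m P d) (convexHull ℝ (D + MspP m P d md)) ∩ Msp m P d md}

/-- The family `G(M_t; -M_{t,+}) = {D ⊆ M_t : D = cl co (D - M_{t,+})}`. -/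
def GspMinus {m0 : MeasurableSpace Ω} (m : MeasurableSpace Ω) (P : @Measure Ω m0)
    (d md : ℕ) : Set (Set (Ω → Fin d → ℝ)) :=
  {D | D ⊆ Msp m P d md ∧
    D = @closure _ (wStar m P d) (convexHull ℝ (D - MspP m P d md)) ∩ Msp m P d md}

/-- `F_t`-conditional convexity of a set of random vectors. -/
def CondConvexSet {m0 : MeasurableSpace Ω} (m : MeasurableSpace Ω) (P : @Measure Ω m0)
    {d : ℕ} (D : Set (Ω → Fin d → ℝ)) : Prop :=
  ∀ u ∈ D, ∀ v ∈ D, ∀ lam : Ω → ℝ, Measurable[m] lam →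
    (∀ᵐ ω ∂P, lam ω ∈ Set.Icc (0:ℝ) 1) →
    (fun ω i => lam ω * u ω i + (1 - lam ω) * v ω i) ∈ D

/-- Conditional convex upper continuity of a risk measure for vectors. -/
def CUCv {m0 : MeasurableSpace Ω} (mDom mVal : MeasurableSpace Ω) (P : @Measure Ω m0)
    (d md : ℕ) (R : (Ω → Fin d → ℝ) → Set (Ω → Fin d → ℝ)) : Prop :=
  ∀ D ∈ GspMinus mVal P d md, CondConvexSet mVal P D →
    IsClosedIn (wStar mDom P d) (Linf mDom d) {X | X ∈ Linf mDom d ∧ (R X ∩ D).Nonempty}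

/-- Conditional convex upper continuity of a risk measure for processes. -/
def CUCp {m0 : MeasurableSpace Ω} (T : ℕ) (F : Fin (T+1) → MeasurableSpace Ω)
    (P : @Measure Ω m0) (d md : ℕ) (t : Fin (T+1))
    (ρ : (Fin (T+1) → Ω → Fin d → ℝ) → Set (Ω → Fin d → ℝ)) : Prop :=
  ∀ D ∈ GspMinus (F t) P d md, CondConvexSet (F t) P D →
    IsClosedIn (procTop T F P d t) (procSp T F d t)
      {X | X ∈ procSp T F d t ∧ (ρ X ∩ D).Nonempty}

/-! ### Dual variables and penalty functions -/

/-- The real-valued Radon–Nikodym density `dQ/dP`. -/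
def rnD {m0 : MeasurableSpace Ω} (P Q : @Measure Ω m0) : Ω → ℝ :=
  fun ω => (Q.rnDeriv P ω).toReal

/-- The conditional expectation operator `E_t = E[· | m]` (w.r.t. P). -/
def EE {m0 : MeasurableSpace Ω} (m : MeasurableSpace Ω) (P : @Measure Ω m0) (f : Ω → ℝ) :
    Ω → ℝ :=
  MeasureTheory.condExp m P f

/-- `ξ_{t,s}(Q) = E_s[dQ/dP] / E_t[dQ/dP]` on `{E_t[dQ/dP] > 0}` and `1` otherwise. -/
def xi {m0 : MeasurableSpace Ω} {T : ℕ} (F : Fin (T+1) → MeasurableSpace Ω)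
    (P Q : @Measure Ω m0) (t s : Fin (T+1)) : Ω → ℝ :=
  fun ω => if 0 < EE (F t) P (rnD P Q) ω
    then EE (F s) P (rnD P Q) ω / EE (F t) P (rnD P Q) ω
    else 1

/-- The `P`-a.s. version `E^Q_t[f] = E_t[ξ_{t,T}(Q) f]` of the `Q`-conditional expectation. -/
def EQ {m0 : MeasurableSpace Ω} {T : ℕ} (F : Fin (T+1) → MeasurableSpace Ω)
    (P Q : @Measure Ω m0) (t : Fin (T+1)) (f : Ω → ℝ) : Ω → ℝ :=
  EE (F t) P (fun ω => xi F P Q t (Fin.last T) ω * f ω)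

/-- The halfspace-type set `Γ_t(w) = {u ∈ L^∞_t : w^⊤ u ≥ 0 a.s.}`. -/
def Gam {m0 : MeasurableSpace Ω} (m : MeasurableSpace Ω) (P : @Measure Ω m0) (d : ℕ)
    (w : Ω → Fin d → ℝ) : Set (Ω → Fin d → ℝ) :=
  {u | u ∈ Linf m d ∧ ∀ᵐ ω ∂P, 0 ≤ ∑ i, w ω i * u ω i}

/-- Membership in the positive dual cone `M^*_{t,+} ⊆ L^1_t`. -/
def inMstarPlus {m0 : MeasurableSpace Ω} (m : MeasurableSpace Ω) (P : @Measure Ω m0)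
    (d md : ℕ) (w : Ω → Fin d → ℝ) : Prop :=
  w ∈ L1t m P d ∧ ∀ mm ∈ MspP m P d md, 0 ≤ ∫ ω, ∑ i, w ω i * mm ω i ∂P

/-- Membership in the orthogonal space `M_t^⊥ ⊆ L^1_t`. -/
def inMperp {m0 : MeasurableSpace Ω} (m : MeasurableSpace Ω) (P : @Measure Ω m0)
    (d md : ℕ) (w : Ω → Fin d → ℝ) : Prop :=
  w ∈ L1t m P d ∧ ∀ mm ∈ Msp m P d md, ∫ ω, ∑ i, w ω i * mm ω i ∂P = 0

/-- `M_t(P)`: probability measures absolutely continuous w.r.t. `P` agreeing with `P` on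
`F_t`. -/
def MtP {m0 : MeasurableSpace Ω} {T : ℕ} (F : Fin (T+1) → MeasurableSpace Ω)
    (P : @Measure Ω m0) (t : Fin (T+1)) : Set (@Measure Ω m0) :=
  {Q | IsProbabilityMeasure Q ∧ Q ≪ P ∧ ∀ A : Set Ω, MeasurableSet[F t] A → Q A = P A}

/-- The set `W_t` of dual variables for risk measures for processes. -/
def Wt {m0 : MeasurableSpace Ω} {T : ℕ} (F : Fin (T+1) → MeasurableSpace Ω)
    (P : @Measure Ω m0) (d md : ℕ) (t : Fin (T+1)) :
    Set ((Fin (T+1) → Fin d → @Measure Ω m0) × (Fin (T+1) → Ω → Fin d → ℝ)) :=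
  {Qw | (∀ s, t ≤ s → ∀ i, Qw.1 s i ∈ MtP F P t) ∧
    (∀ s, t ≤ s → inMstarPlus (F t) P d md (Qw.2 s) ∧ ¬ inMperp (F t) P d md (Qw.2 s)) ∧
    (∀ s, t ≤ s → (∀ᵐ ω ∂P, ∀ i, 0 ≤ Qw.2 s ω i * xi F P (Qw.1 s i) t s ω) ∧
      ∀ i, Integrable (fun ω => Qw.2 s ω i * xi F P (Qw.1 s i) t s ω) P)}

/-- The minimal penalty function `α_t(Q,w)` of a risk measure for processes with acceptance
set `At`. -/
def alphaP {m0 : MeasurableSpace Ω} (T : ℕ) (F : Fin (T+1) → MeasurableSpace Ω)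
    (P : @Measure Ω m0) (d md : ℕ) (t : Fin (T+1))
    (At : Set (Fin (T+1) → Ω → Fin d → ℝ))
    (Q : Fin (T+1) → Fin d → @Measure Ω m0) (w : Fin (T+1) → Ω → Fin d → ℝ) :
    Set (Ω → Fin d → ℝ) :=
  ⋂ Y ∈ At, ∑ s ∈ Ici t,
    (({fun ω i => EQ F P (Q s i) t (fun ω' => - Y s ω' i) ω} + Gam (F t) P d (w s)) ∩
      Msp (F t) P d md)

/-- The minimal penalty function of a (restricted) risk measure for vectors with acceptance
set `A`. -/
def alphaV {m0 : MeasurableSpace Ω} (m : MeasurableSpace Ω) (P : @Measure Ω m0) (d md : ℕ)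
    (A : Set (Ω → Fin d → ℝ)) (v : Ω → Fin d → ℝ) : Set (Ω → Fin d → ℝ) :=
  ⋂ Z ∈ A, (({fun ω i => - Z ω i} + Gam m P d v) ∩ Msp m P d md)

/-- Minkowski subtraction `A -• B = {m ∈ Mt : B + {m} ⊆ A}` within `Mt`. -/
def mSub {γ : Type*} [Add γ] (Mt A B : Set γ) : Set γ :=
  {mm | mm ∈ Mt ∧ ∀ b ∈ B, b + mm ∈ A}

/-- The maximal set of dual variables `W_t^{max}` for coherent risk measures for processes. -/
def WtMax {m0 : MeasurableSpace Ω} (T : ℕ) (F : Fin (T+1) → MeasurableSpace Ω)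
    (P : @Measure Ω m0) (d md : ℕ) (t : Fin (T+1))
    (At : Set (Fin (T+1) → Ω → Fin d → ℝ)) :
    Set ((Fin (T+1) → Fin d → @Measure Ω m0) × (Fin (T+1) → Ω → Fin d → ℝ)) :=
  {Qw | Qw ∈ Wt F P d md t ∧ ∀ Z ∈ At,
    ∀ᵐ ω ∂P, 0 ≤ ∑ s ∈ Ici t, ∑ i, Qw.2 s ω i * EQ F P (Qw.1 s i) t (fun ω' => Z s ω' i) ω}

/-! ### Dual variables on the optional space -/

/-- `ξ̄_{t,s}(Q̄)` on the optional space. -/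
def xiBar {T : ℕ} (F : Fin (T+1) → MeasurableSpace Ω)
    (Pb Qb : @Measure (Ω × Fin (T+1)) (optSigma T F)) (t s : Fin (T+1)) :
    Ω × Fin (T+1) → ℝ :=
  fun x => if 0 < EE (optFilt T F t) Pb (rnD Pb Qb) x
    then EE (optFilt T F s) Pb (rnD Pb Qb) x / EE (optFilt T F t) Pb (rnD Pb Qb) x
    else 1

/-- `Ē^{Q̄}_t[f] = Ē_t[ξ̄_{t,T}(Q̄) f]`, the `P̄`-a.s. version of the `Q̄`-conditional
expectation on the optional space. -/
def EQbar {T : ℕ} (F : Fin (T+1) → MeasurableSpace Ω)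
    (Pb Qb : @Measure (Ω × Fin (T+1)) (optSigma T F)) (t : Fin (T+1))
    (f : Ω × Fin (T+1) → ℝ) : Ω × Fin (T+1) → ℝ :=
  EE (optFilt T F t) Pb (fun y => xiBar F Pb Qb t (Fin.last T) y * f y)

/-- The process `w̄^T_t(Q̄, w̄)`. -/
def wBarT {m0 : MeasurableSpace Ω} (T : ℕ) (F : Fin (T+1) → MeasurableSpace Ω)
    (P : @Measure Ω m0) (μ : Fin (T+1) → Ω → ℝ) {d : ℕ} (t : Fin (T+1))
    (Qb : Fin d → @Measure (Ω × Fin (T+1)) (optSigma T F))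
    (wb : Ω × Fin (T+1) → Fin d → ℝ) : Ω × Fin (T+1) → Fin d → ℝ :=
  fun x i => if x.2 < t then wb x i
    else wb (x.1, t) i * xiBar F (optMeas T F P μ) (Qb i) t (Fin.last T) x

/-- The set `W̄_t` of dual variables for risk measures for vectors on the optional
filtration. -/
def WtBar {m0 : MeasurableSpace Ω} (T : ℕ) (F : Fin (T+1) → MeasurableSpace Ω)
    (P : @Measure Ω m0) (μ : Fin (T+1) → Ω → ℝ) (d md : ℕ) (t : Fin (T+1)) :
    Set ((Fin d → @Measure (Ω × Fin (T+1)) (optSigma T F)) × (Ω × Fin (T+1) → Fin d → ℝ)) :=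
  {Qw | (∀ i, IsProbabilityMeasure (Qw.1 i) ∧ Qw.1 i ≪ optMeas T F P μ ∧
      ∀ S : Set (Ω × Fin (T+1)), MeasurableSet[optFilt T F t] S →
        Qw.1 i S = optMeas T F P μ S) ∧
    (inMstarPlus (optFilt T F t) (optMeas T F P μ) d md Qw.2 ∧
      ¬ inMperp (optFilt T F t) (optMeas T F P μ) d md Qw.2) ∧
    (∀ᵐ x ∂(optMeas T F P μ), ∀ i, 0 ≤ wBarT T F P μ t Qw.1 Qw.2 x i) ∧
    (∀ i, Integrable (fun x => wBarT T F P μ t Qw.1 Qw.2 x i) (optMeas T F P μ))}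

/-- The minimal penalty function `ᾱ_t(Q̄, w̄)` of a risk measure for vectors on the optional
filtration with acceptance set `Ab`. -/
def alphaBar {m0 : MeasurableSpace Ω} (T : ℕ) (F : Fin (T+1) → MeasurableSpace Ω)
    (P : @Measure Ω m0) (μ : Fin (T+1) → Ω → ℝ) (d md : ℕ) (t : Fin (T+1))
    (Ab : Set (Ω × Fin (T+1) → Fin d → ℝ))
    (Qb : Fin d → @Measure (Ω × Fin (T+1)) (optSigma T F))
    (wb : Ω × Fin (T+1) → Fin d → ℝ) : Set (Ω × Fin (T+1) → Fin d → ℝ) :=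
  ⋂ Y ∈ Ab,
    (({fun x i => EQbar F (optMeas T F P μ) (Qb i) t (fun y => - Y y i) x} +
        Gam (optFilt T F t) (optMeas T F P μ) d wb) ∩
      Msp (optFilt T F t) (optMeas T F P μ) d md)

/-- The dual variables `(Q̂, w) = W_t(Q ⊗ ψ, w̄)`: the measure components. -/
def hatQ {m0 : MeasurableSpace Ω} {T : ℕ} (F : Fin (T+1) → MeasurableSpace Ω)
    (P : @Measure Ω m0) (μ : Fin (T+1) → Ω → ℝ) {d : ℕ}
    (Q : Fin d → @Measure Ω m0) (ψ : Fin d → Fin (T+1) → Ω → ℝ) (t : Fin (T+1)) :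
    Fin (T+1) → Fin d → @Measure Ω m0 :=
  fun s i => P.withDensity fun ω => ENNReal.ofReal (
    if 0 < EQ F P (Q i) t (ψ i s) ω
    then ψ i s ω / EQ F P (Q i) t (ψ i s) ω * xi F P (Q i) t s ω
    else μ s ω / EE (F t) P (μ s) ω)

/-- The dual variables `(Q̂, w) = W_t(Q ⊗ ψ, w̄)`: the weight components. -/
def hatw {m0 : MeasurableSpace Ω} {T : ℕ} (F : Fin (T+1) → MeasurableSpace Ω)
    (P : @Measure Ω m0) (μ : Fin (T+1) → Ω → ℝ) {d : ℕ}
    (Q : Fin d → @Measure Ω m0) (ψ : Fin d → Fin (T+1) → Ω → ℝ) (t : Fin (T+1))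
    (wb : Ω × Fin (T+1) → Fin d → ℝ) : Fin (T+1) → Ω → Fin d → ℝ :=
  fun s ω i => EQ F P (Q i) t (ψ i s) ω / (1 - ∑ r ∈ Iio t, μ r ω) * wb (ω, t) i

/-- The weight component `w̄` of `W̄_t(Q,w) = (Q̄,w̄)`. -/
def barw (T : ℕ) {d : ℕ} (t : Fin (T+1)) (w : Fin (T+1) → Ω → Fin d → ℝ) :
    Ω × Fin (T+1) → Fin d → ℝ :=
  fun x i => if t ≤ x.2 then ∑ s ∈ Ici t, (if 0 < w s x.1 i then w s x.1 i else 0) else 0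

/-- The measure component `Q̄` of `W̄_t(Q,w) = (Q̄,w̄)`, defined via its density w.r.t. `P̄`. -/
def barQ {m0 : MeasurableSpace Ω} (T : ℕ) (F : Fin (T+1) → MeasurableSpace Ω)
    (P : @Measure Ω m0) (μ : Fin (T+1) → Ω → ℝ) {d : ℕ}
    (Q : Fin (T+1) → Fin d → @Measure Ω m0) (w : Fin (T+1) → Ω → Fin d → ℝ)
    (t : Fin (T+1)) : Fin d → @Measure (Ω × Fin (T+1)) (optSigma T F) :=
  fun i => (optMeas T F P μ).withDensity fun x => ENNReal.ofReal (
    if x.2 < t then 1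
    else ((1 - ∑ r ∈ Iio t, μ r x.1) / μ x.2 x.1) *
      (if 0 < barw T t w (x.1, t) i then w x.2 x.1 i / barw T t w (x.1, t) i else 1) *
      xi F P (Q x.2 i) t x.2 x.1)

end RMPaper
section AuxRM

open MeasureTheory ENNReal

variable {α : Type*} {m m0 : MeasurableSpace α}

lemma aux_trim_eq (hm : m ≤ m0) {Q P : @Measure α m0}
    (h : ∀ A, MeasurableSet[m] A → Q A = P A) : Q.trim hm = P.trim hm := by
  refine @Measure.ext α m _ _ (fun A hA => ?_)
  rw [trim_measurableSet_eq hm hA, trim_measurableSet_eq hm hA, h A hA]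

lemma aux_integral_eq (hm : m ≤ m0) {Q P : @Measure α m0}
    (h : ∀ A, MeasurableSet[m] A → Q A = P A) {f : α → ℝ}
    (hf : Measurable[m] f) : ∫ x, f x ∂Q = ∫ x, f x ∂P := by
  rw [integral_trim hm hf.stronglyMeasurable, aux_trim_eq hm h,
    ← integral_trim hm hf.stronglyMeasurable]

lemma aux_setIntegral_eq (hm : m ≤ m0) {Q P : @Measure α m0}
    (h : ∀ A, MeasurableSet[m] A → Q A = P A) {f : α → ℝ}
    (hf : Measurable[m] f) {A : Set α} (hA : MeasurableSet[m] A) :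
    ∫ x in A, f x ∂Q = ∫ x in A, f x ∂P := by
  rw [← integral_indicator (hm A hA), ← integral_indicator (hm A hA)]
  exact aux_integral_eq hm h (hf.indicator hA)

lemma aux_setLIntegral_eq (hm : m ≤ m0) {Q P : @Measure α m0}
    (h : ∀ A, MeasurableSet[m] A → Q A = P A) {f : α → ℝ≥0∞} (hf : Measurable[m] f)
    {A : Set α} (hA : MeasurableSet[m] A) :
    ∫⁻ x in A, f x ∂Q = ∫⁻ x in A, f x ∂P := by
  have h1 := lintegral_trim (μ := Q) hm (hf.indicator hA)
  have h2 := lintegral_trim (μ := P) hm (hf.indicator hA)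
  rw [← lintegral_indicator (hm A hA), ← lintegral_indicator (hm A hA), ← h1, ← h2,
    aux_trim_eq hm h]

lemma aux_int (ν : @Measure α m0) [IsFiniteMeasure ν] {f : α → ℝ}
    (hf : AEStronglyMeasurable f ν) {C : ℝ} (h : ∀ᵐ x ∂ν, |f x| ≤ C) : Integrable f ν :=
  (integrable_const C).mono' hf (by simpa [Real.norm_eq_abs] using h)

lemma aux_ae_eq (hm : m ≤ m0) (P : @Measure α m0) [IsFiniteMeasure P] {f g : α → ℝ}
    (hf : Measurable[m] f) (hg : Measurable[m] g)
    (hfi : Integrable f P) (hgi : Integrable g P)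
    (h : ∀ A, MeasurableSet[m] A → ∫ x in A, f x ∂P = ∫ x in A, g x ∂P) : f =ᵐ[P] g := by
  have hft : Integrable f (P.trim hm) := hfi.trim hm hf.stronglyMeasurable
  have hgt : Integrable g (P.trim hm) := hgi.trim hm hg.stronglyMeasurable
  have hint : ∀ (u : α → ℝ), Measurable[m] u → ∀ (s : Set α), MeasurableSet[m] s →
      ∫ x, u x ∂((P.trim hm).restrict s) = ∫ x in s, u x ∂P := by
    intro u hu s hs
    rw [restrict_trim hm P hs, ← integral_trim hm hu.stronglyMeasurable]
  have htr : f =ᵐ[P.trim hm] g := by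
    refine ae_eq_of_forall_setIntegral_eq_of_sigmaFinite
      (fun s _ _ => hft.restrict) (fun s _ _ => hgt.restrict) ?_
    intro s hs _
    rw [hint f hf s hs, hint g hg s hs]
    exact h s hs
  exact ae_eq_of_ae_eq_trim htr

lemma aux_key (hm : m ≤ m0) (Q P : @Measure α m0) [IsFiniteMeasure Q] [IsFiniteMeasure P]
    {g : α → ℝ} (hg : Measurable[m] g) {ε : ℝ} (hε : 0 < ε)
    (hgP : ∀ᵐ x ∂P, ε ≤ g x ∧ g x ≤ 1) (hgQ : ∀ᵐ x ∂Q, ε ≤ g x ∧ g x ≤ 1)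
    (hint : ∀ A, MeasurableSet[m] A → ∫ x in A, g x ∂Q = ∫ x in A, g x ∂P) :
    ∀ A, MeasurableSet[m] A → Q A = P A := by
  set f : α → ℝ≥0∞ := fun x => ENNReal.ofReal (g x) with hfdef
  have hfm : Measurable[m] f := hg.ennreal_ofReal
  have hfm0 : Measurable f := hfm.mono hm le_rfl
  have cancel : ∀ (ν : @Measure α m0), (∀ᵐ x ∂ν, ε ≤ g x ∧ g x ≤ 1) →
      (ν.withDensity f).withDensity f⁻¹ = ν := by
    intro ν hν
    rw [← withDensity_mul (f := f) (g := f⁻¹) ν hfm0 hfm0.inv]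
    have h1 : (f * f⁻¹) =ᵐ[ν] 1 := by
      filter_upwards [hν] with x hx
      have h0 : f x ≠ 0 := by
        simp only [hfdef, ne_eq, ENNReal.ofReal_eq_zero, not_le]
        linarith [hx.1]
      show f x * (f x)⁻¹ = 1
      exact ENNReal.mul_inv_cancel h0 (by simp [hfdef])
    rw [withDensity_congr_ae h1, withDensity_one]
  have hintg : ∀ (ν : @Measure α m0), IsFiniteMeasure ν →
      (∀ᵐ x ∂ν, ε ≤ g x ∧ g x ≤ 1) → Integrable g ν := by
    intro ν hfin hν
    exact aux_int ν (hg.mono hm le_rfl).aestronglyMeasurable (C := 1)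
      (hν.mono fun x hx => by rw [abs_of_nonneg (le_trans hε.le hx.1)]; exact hx.2)
  have hwd : ∀ A, MeasurableSet[m] A → (Q.withDensity f) A = (P.withDensity f) A := by
    intro A hA
    rw [withDensity_apply f (hm A hA), withDensity_apply f (hm A hA)]
    have e1 : ENNReal.ofReal (∫ x in A, g x ∂Q) = ∫⁻ x in A, f x ∂Q :=
      ofReal_integral_eq_lintegral_ofReal ((hintg Q inferInstance hgQ).integrableOn)
        (ae_restrict_of_ae (hgQ.mono fun x hx => le_trans hε.le hx.1))
    have e2 : ENNReal.ofReal (∫ x in A, g x ∂P) = ∫⁻ x in A, f x ∂P :=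
      ofReal_integral_eq_lintegral_ofReal ((hintg P inferInstance hgP).integrableOn)
        (ae_restrict_of_ae (hgP.mono fun x hx => le_trans hε.le hx.1))
    rw [← e1, ← e2, hint A hA]
  intro A hA
  calc Q A = (Q.withDensity f).withDensity f⁻¹ A := by rw [cancel Q hgQ]
    _ = ∫⁻ x in A, f⁻¹ x ∂(Q.withDensity f) := withDensity_apply _ (hm A hA)
    _ = ∫⁻ x in A, f⁻¹ x ∂(P.withDensity f) := aux_setLIntegral_eq hm hwd hfm.inv hA
    _ = (P.withDensity f).withDensity f⁻¹ A := (withDensity_apply _ (hm A hA)).symm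
    _ = P A := by rw [cancel P hgP]

end AuxRM

open RMPaper MeasureTheory Finset Pointwise Filter in
/-- For `Q̄ = Q ⊗ ψ ≪ P̄` and every `t ∈ 𝕋`: `Q̄ = P̄` on `F̄_t` if and only if
`Q = P` on `F_t` and `ψ_s = μ_s` `P`-a.s. for every `s < t`. -/
theorem optional_measure_agreement
    {Ω : Type} [m0 : MeasurableSpace Ω] (P : Measure Ω) [IsProbabilityMeasure P]
    (T : ℕ) (F : Fin (T+1) → MeasurableSpace Ω)
    (hFmono : Monotone F) (hFle : ∀ r, F r ≤ m0) (hFT : F (Fin.last T) = m0)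
    (hF0 : ∀ A : Set Ω, MeasurableSet[F 0] A → P A = 0 ∨ P A = 1)
    (μ : Fin (T+1) → Ω → ℝ) (hμa : ∀ r, Measurable[F r] (μ r))
    (hμs : ∀ᵐ ω ∂P, ∑ r, μ r ω = 1)
    (hμp : ∃ ε > 0, ∀ᵐ ω ∂P, ∀ r, ε < μ r ω)
    (Qb : @Measure (Ω × Fin (T+1)) (optSigma T F))
    (hQbprob : IsProbabilityMeasure Qb) (hQbac : Qb ≪ optMeas T F P μ)
    (Q : Measure Ω) (hQprob : IsProbabilityMeasure Q) (hQac : Q ≪ P)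
    (ψ : Fin (T+1) → Ω → ℝ)
    (hψa : ∀ r, Measurable[F r] (ψ r)) (hψpos : ∀ r, ∀ᵐ ω ∂P, 0 ≤ ψ r ω)
    (hψsum : ∀ᵐ ω ∂P, ∑ r, ψ r ω = 1)
    (hdecomp : ∀ X : Ω × Fin (T+1) → ℝ, Measurable[optSigma T F] X →
      (∃ C : ℝ, ∀ x, |X x| ≤ C) → ∫ x, X x ∂Qb = ∫ ω, ∑ r, ψ r ω * X (ω, r) ∂Q) :
    ∀ t : Fin (T+1),
      (∀ S : Set (Ω × Fin (T+1)), MeasurableSet[optFilt T F t] S → Qb S = optMeas T F P μ S)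
      ↔ ((∀ A : Set Ω, MeasurableSet[F t] A → Q A = P A) ∧
          ∀ s : Fin (T+1), s < t → ψ s =ᵐ[P] μ s) := by
  intro t
  haveI := hQbprob
  obtain ⟨ε, hε0, hεa⟩ := hμp
  -- basic a.e. bounds
  have hμ0 : ∀ r, ∀ᵐ ω ∂P, 0 ≤ μ r ω := fun r => hεa.mono fun ω h => (hε0.trans (h r)).le
  have hμ01 : ∀ᵐ ω ∂P, ∀ r, 0 ≤ μ r ω ∧ μ r ω ≤ 1 := by
    filter_upwards [hεa, hμs] with ω h hs
    intro r
    refine ⟨(hε0.trans (h r)).le, ?_⟩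
    calc μ r ω ≤ ∑ r', μ r' ω :=
          Finset.single_le_sum (fun r' _ => (hε0.trans (h r')).le) (Finset.mem_univ r)
      _ = 1 := hs
  have hψ01 : ∀ᵐ ω ∂P, ∀ r, 0 ≤ ψ r ω ∧ ψ r ω ≤ 1 := by
    filter_upwards [ae_all_iff.2 hψpos, hψsum] with ω h hs r
    refine ⟨h r, ?_⟩
    calc ψ r ω ≤ ∑ r', ψ r' ω :=
          Finset.single_le_sum (fun r' _ => h r') (Finset.mem_univ r)
      _ = 1 := hs
  have hψ01Q : ∀ᵐ ω ∂Q, ∀ r, 0 ≤ ψ r ω ∧ ψ r ω ≤ 1 := hψ01.filter_mono hQac.ae_le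
  have hψsumQ : ∀ᵐ ω ∂Q, ∑ r, ψ r ω = 1 := hψsum.filter_mono hQac.ae_le
  -- measurability in m0
  have measψ : ∀ r, Measurable (ψ r) := fun r => (hψa r).mono (hFle r) le_rfl
  have measμ : ∀ r, Measurable (μ r) := fun r => (hμa r).mono (hFle r) le_rfl
  -- integrability helpers
  have int01 : ∀ (ν : Measure Ω), IsFiniteMeasure ν → ∀ (f : Ω → ℝ), Measurable f →
      (∀ᵐ ω ∂ν, 0 ≤ f ω ∧ f ω ≤ 1) → Integrable f ν := by
    intro ν hfin f hf hb
    exact aux_int ν hf.aestronglyMeasurable (C := 1)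
      (hb.mono fun ω h => abs_le.2 ⟨by linarith [h.1], h.2⟩)
  have intψQ : ∀ r, Integrable (ψ r) Q := fun r =>
    int01 Q inferInstance _ (measψ r) (hψ01Q.mono fun ω h => h r)
  have intψP : ∀ r, Integrable (ψ r) P := fun r =>
    int01 P inferInstance _ (measψ r) (hψ01.mono fun ω h => h r)
  have intμP : ∀ r, Integrable (μ r) P := fun r =>
    int01 P inferInstance _ (measμ r) (hμ01.mono fun ω h => h r)
  have int_ite : ∀ (ν : Measure Ω), IsFiniteMeasure ν → ∀ (f : Fin (T+1) → Ω → ℝ),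
      (∀ r, Measurable (f r)) → (∀ᵐ ω ∂ν, ∀ r, 0 ≤ f r ω ∧ f r ω ≤ 1) →
      ∀ (c : Prop) (_ : Decidable c) (r : Fin (T+1)),
      Integrable (fun ω => if c then f r ω else 0) ν := by
    intro ν hfin f hm hb c hc r
    rcases hc with hneg | hpos
    · simpa [hneg] using (integrable_const (0:ℝ))
    · simpa [hpos] using int01 ν hfin _ (hm r) (hb.mono fun ω h => h r)
  have measS : ∀ (c : Fin (T+1) → Prop) (_ : DecidablePred c) (f : Fin (T+1) → Ω → ℝ),
      (∀ r, Measurable (f r)) → Measurable (fun ω => ∑ r, if c r then f r ω else 0) := by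
    intro c hc f hf
    refine Finset.measurable_sum _ (fun r _ => ?_)
    rcases hc r with hneg | hpos
    · simpa [hneg] using (measurable_const : Measurable (fun _ : Ω => (0:ℝ)))
    · simpa [hpos] using hf r
  have intS : ∀ (ν : Measure Ω), IsFiniteMeasure ν → ∀ (c : Fin (T+1) → Prop)
      (_ : DecidablePred c) (f : Fin (T+1) → Ω → ℝ),
      (∀ r, Measurable (f r)) → (∀ᵐ ω ∂ν, ∀ r, 0 ≤ f r ω ∧ f r ω ≤ 1) →
      Integrable (fun ω => ∑ r, if c r then f r ω else 0) ν := by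
    intro ν hfin c hc f hf hb
    refine aux_int ν ((measS c hc f hf).aestronglyMeasurable) (C := (T+1 : ℝ)) ?_
    filter_upwards [hb] with ω h
    calc |∑ r, if c r then f r ω else 0| ≤ ∑ r : Fin (T+1), |if c r then f r ω else 0| :=
        Finset.abs_sum_le_sum_abs _ _
      _ ≤ ∑ _r : Fin (T+1), (1:ℝ) := by
          refine Finset.sum_le_sum (fun r _ => ?_)
          by_cases hc' : c r
          · rw [if_pos hc', abs_of_nonneg (h r).1]; exact (h r).2
          · simp [hc']
      _ = (T+1 : ℝ) := by simp [Finset.card_univ]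
  -- sum splitting identities
  have sum_total : ∀ (u : Fin (T+1)) (f : Fin (T+1) → Ω → ℝ) (ω : Ω),
      (∑ r, if r < u then f r ω else 0) + (∑ r, if u ≤ r then f r ω else 0) = ∑ r, f r ω := by
    intro u f ω
    rw [← Finset.sum_add_distrib]
    refine Finset.sum_congr rfl fun r _ => ?_
    rcases lt_or_ge r u with h | h
    · simp [h, not_le.2 h]
    · simp [h, not_lt.2 h]
  have sum_split : ∀ (v : Fin (T+1)), v ≤ t → ∀ (f : Fin (T+1) → Ω → ℝ) (ω : Ω),
      (∑ r, if v ≤ r then f r ω else 0) =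
        (∑ r, if v ≤ r ∧ r < t then f r ω else 0) + (∑ r, if t ≤ r then f r ω else 0) := by
    intro v hv f ω
    rw [← Finset.sum_add_distrib]
    refine Finset.sum_congr rfl fun r _ => ?_
    rcases lt_or_ge r t with h | h
    · rcases le_or_gt v r with h2 | h2
      · simp [h2, h, not_le.2 h]
      · simp [not_le.2 h2, not_le.2 (h2.trans_le hv)]
    · have h2 : v ≤ r := hv.trans h
      simp [h2, h, not_lt.2 h]
  -- the tail function G u = 1 - ∑_{r<u} μ_r
  have measG : ∀ u : Fin (T+1),
      Measurable[F u] (fun ω => 1 - ∑ r, if r < u then μ r ω else 0) := by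
    intro u
    have hsum : Measurable[F u] (fun ω => ∑ r, if r < u then μ r ω else 0) := by
      refine Finset.measurable_sum _ (fun r _ => ?_)
      by_cases h : r < u
      · simpa [h] using (hμa r).mono (hFmono h.le) le_rfl
      · simpa [h] using (measurable_const : Measurable[F u] (fun _ : Ω => (0:ℝ)))
    exact measurable_const.sub hsum
  have boundsGP : ∀ u : Fin (T+1), ∀ᵐ ω ∂P,
      ε ≤ (1 - ∑ r, if r < u then μ r ω else 0) ∧
        (1 - ∑ r, if r < u then μ r ω else 0) ≤ 1 := by
    intro u
    filter_upwards [hμ01, hμs, hεa] with ω h hs hε'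
    have htot := sum_total u μ ω
    rw [hs] at htot
    have h1 : (if u ≤ u then μ u ω else 0) ≤ ∑ r, if u ≤ r then μ r ω else 0 := by
      refine Finset.single_le_sum (f := fun r => if u ≤ r then μ r ω else 0)
        (fun r _ => ?_) (Finset.mem_univ u)
      by_cases h' : u ≤ r
      · simp [h', (h r).1]
      · simp [h']
    rw [if_pos le_rfl] at h1
    have h2 : (0:ℝ) ≤ ∑ r, if r < u then μ r ω else 0 := by
      refine Finset.sum_nonneg (fun r _ => ?_)
      by_cases h' : r < u
      · simp [h', (h r).1]
      · simp [h']
    constructor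
    · have := hε' u
      linarith
    · linarith
  -- the two a.e. identities
  have e1 : ∀ u : Fin (T+1), (∀ r, r < u → ψ r =ᵐ[P] μ r) →
      ∀ᵐ ω ∂Q, (∑ r, if u ≤ r then ψ r ω else 0)
        = 1 - ∑ r, if r < u then μ r ω else 0 := by
    intro u hψlt
    have hψltQ : ∀ᵐ ω ∂Q, ∀ r, r < u → ψ r ω = μ r ω := by
      have hP : ∀ᵐ ω ∂P, ∀ r, r < u → ψ r ω = μ r ω := by
        refine ae_all_iff.2 fun r => ?_
        by_cases h : r < u
        · exact (hψlt r h).mono fun ω e _ => e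
        · exact Filter.Eventually.of_forall fun ω h' => absurd h' h
      exact hP.filter_mono hQac.ae_le
    filter_upwards [hψsumQ, hψltQ] with ω hs he
    have h1 := sum_total u ψ ω
    rw [hs] at h1
    have h2 : (∑ r, if r < u then ψ r ω else 0) = ∑ r, if r < u then μ r ω else 0 := by
      refine Finset.sum_congr rfl fun r _ => ?_
      by_cases h : r < u
      · simp [h, he r h]
      · simp [h]
    linarith
  have e2 : ∀ u : Fin (T+1), ∀ᵐ ω ∂P,
      (∑ r, if u ≤ r then μ r ω else 0) = 1 - ∑ r, if r < u then μ r ω else 0 := by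
    intro u
    filter_upwards [hμs] with ω hs
    have h1 := sum_total u μ ω
    rw [hs] at h1
    linarith
  -- step 2: measure agreement at level u
  have step2 : ∀ u : Fin (T+1), (∀ r, r < u → ψ r =ᵐ[P] μ r) →
      (∀ A, MeasurableSet[F u] A →
        ∫ ω in A, (∑ r, if u ≤ r then ψ r ω else 0) ∂Q
          = ∫ ω in A, (∑ r, if u ≤ r then μ r ω else 0) ∂P) →
      ∀ A, MeasurableSet[F u] A → Q A = P A := by
    intro u hψlt h2
    refine aux_key (hFle u) Q P (measG u) hε0 (boundsGP u)
      ((boundsGP u).filter_mono hQac.ae_le) ?_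
    intro A hA
    calc ∫ ω in A, (1 - ∑ r, if r < u then μ r ω else 0) ∂Q
        = ∫ ω in A, (∑ r, if u ≤ r then ψ r ω else 0) ∂Q :=
          integral_congr_ae (ae_restrict_of_ae ((e1 u hψlt).mono fun ω e => e.symm))
      _ = ∫ ω in A, (∑ r, if u ≤ r then μ r ω else 0) ∂P := h2 A hA
      _ = ∫ ω in A, (1 - ∑ r, if r < u then μ r ω else 0) ∂P :=
          integral_congr_ae (ae_restrict_of_ae (e2 u))
  -- the induction: conditions imply the goal
  have cond_to_goal : ∀ n : ℕ, ∀ u : Fin (T+1), (u : ℕ) ≤ n →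
      (∀ s : Fin (T+1), s < u → ∀ A, MeasurableSet[F s] A →
        ∫ ω in A, ψ s ω ∂Q = ∫ ω in A, μ s ω ∂P) →
      (∀ v : Fin (T+1), v ≤ u → ∀ A, MeasurableSet[F v] A →
        ∫ ω in A, (∑ r, if v ≤ r then ψ r ω else 0) ∂Q
          = ∫ ω in A, (∑ r, if v ≤ r then μ r ω else 0) ∂P) →
      (∀ A, MeasurableSet[F u] A → Q A = P A) ∧ (∀ s, s < u → ψ s =ᵐ[P] μ s) := by
    intro n
    induction n with
    | zero =>
      intro u hu h1 h2
      have hu0 : ∀ s : Fin (T+1), ¬ s < u := fun s hs => by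
        rw [Fin.lt_def] at hs; omega
      exact ⟨step2 u (fun r hr => absurd hr (hu0 r)) (h2 u le_rfl),
        fun s hs => absurd hs (hu0 s)⟩
    | succ n ih =>
      intro u hu h1 h2
      by_cases hc : (u:ℕ) ≤ n
      · exact ih u hc h1 h2
      · have hun : (u:ℕ) = n + 1 := by omega
        have hnlt : n < T + 1 := by omega
        have hst : (⟨n, hnlt⟩ : Fin (T+1)) < u := by
          rw [Fin.lt_def]; simp; omega
        have prev := ih ⟨n, hnlt⟩ (by simp)
          (fun s' hs' A hA => h1 s' (hs'.trans hst) A hA)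
          (fun v hv A hA => h2 v (hv.trans hst.le) A hA)
        have hψall : ∀ r, r < u → ψ r =ᵐ[P] μ r := by
          intro r hr
          have hrs : r ≤ (⟨n, hnlt⟩ : Fin (T+1)) := by
            rw [Fin.le_def]; rw [Fin.lt_def] at hr; simp; omega
          have hstep : ψ (⟨n, hnlt⟩ : Fin (T+1)) =ᵐ[P] μ (⟨n, hnlt⟩ : Fin (T+1)) := by
            refine aux_ae_eq (hFle _) P (hψa _) (hμa _) (intψP _) (intμP _) ?_
            intro A hA
            have hb : ∫ ω in A, ψ (⟨n, hnlt⟩ : Fin (T+1)) ω ∂Q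
                = ∫ ω in A, ψ (⟨n, hnlt⟩ : Fin (T+1)) ω ∂P :=
              aux_setIntegral_eq (hFle _) prev.1 (hψa _) hA
            rw [← hb]
            exact h1 _ hst A hA
          rcases lt_or_eq_of_le hrs with h | h
          · exact prev.2 r h
          · rw [h]
            exact hstep
        exact ⟨step2 u hψall (h2 u le_rfl), hψall⟩
  -- splitting: the two conditions at t give the summed condition at all v ≤ t
  have hsplit : (∀ s : Fin (T+1), s < t → ∀ A, MeasurableSet[F s] A →
        ∫ ω in A, ψ s ω ∂Q = ∫ ω in A, μ s ω ∂P) →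
      (∀ A, MeasurableSet[F t] A →
        ∫ ω in A, (∑ r, if t ≤ r then ψ r ω else 0) ∂Q
          = ∫ ω in A, (∑ r, if t ≤ r then μ r ω else 0) ∂P) →
      ∀ v : Fin (T+1), v ≤ t → ∀ A, MeasurableSet[F v] A →
        ∫ ω in A, (∑ r, if v ≤ r then ψ r ω else 0) ∂Q
          = ∫ ω in A, (∑ r, if v ≤ r then μ r ω else 0) ∂P := by
    intro h1 h2 v hv A hA
    have key : ∀ (f : Fin (T+1) → Ω → ℝ) (ν : Measure Ω), IsFiniteMeasure ν →
        (∀ r, Measurable (f r)) → (∀ᵐ ω ∂ν, ∀ r, 0 ≤ f r ω ∧ f r ω ≤ 1) →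
        ∫ ω in A, (∑ r, if v ≤ r then f r ω else 0) ∂ν =
          (∑ r, ∫ ω in A, (if v ≤ r ∧ r < t then f r ω else 0) ∂ν) +
          ∫ ω in A, (∑ r, if t ≤ r then f r ω else 0) ∂ν := by
      intro f ν hfin hfm hfb
      rw [show (fun ω => ∑ r, if v ≤ r then f r ω else 0)
          = fun ω => (∑ r, if v ≤ r ∧ r < t then f r ω else 0)
            + (∑ r, if t ≤ r then f r ω else 0) from funext fun ω => sum_split v hv f ω]
      rw [integral_add ((intS ν hfin _ inferInstance f hfm hfb).integrableOn)
        ((intS ν hfin _ inferInstance f hfm hfb).integrableOn)]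
      congr 1
      exact integral_finset_sum _
        (fun r _ => (int_ite ν hfin f hfm hfb _ inferInstance r).integrableOn)
    rw [key ψ Q inferInstance measψ hψ01Q, key μ P inferInstance measμ hμ01]
    congr 1
    · refine Finset.sum_congr rfl fun r _ => ?_
      by_cases h : v ≤ r ∧ r < t
      · simp only [if_pos h]
        exact h1 r h.2 A (hFmono h.1 A hA)
      · simp only [if_neg h, integral_zero]
    · exact h2 A (hFmono hv A hA)
  -- reverse: goal gives the two conditions
  have goal_to_cond1 : (∀ A, MeasurableSet[F t] A → Q A = P A) →
      (∀ s, s < t → ψ s =ᵐ[P] μ s) →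
      ∀ s : Fin (T+1), s < t → ∀ A, MeasurableSet[F s] A →
        ∫ ω in A, ψ s ω ∂Q = ∫ ω in A, μ s ω ∂P := by
    intro hQP hψlt s hst A hA
    have hh1 : ∫ ω in A, ψ s ω ∂Q = ∫ ω in A, μ s ω ∂Q :=
      integral_congr_ae (ae_restrict_of_ae ((hψlt s hst).filter_mono hQac.ae_le))
    have hh2 : ∫ ω in A, μ s ω ∂Q = ∫ ω in A, μ s ω ∂P :=
      aux_setIntegral_eq (hFle t) hQP ((hμa s).mono (hFmono hst.le) le_rfl)
        (hFmono hst.le A hA)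
    exact hh1.trans hh2
  have goal_to_cond2 : (∀ A, MeasurableSet[F t] A → Q A = P A) →
      (∀ s, s < t → ψ s =ᵐ[P] μ s) →
      ∀ A, MeasurableSet[F t] A →
        ∫ ω in A, (∑ r, if t ≤ r then ψ r ω else 0) ∂Q
          = ∫ ω in A, (∑ r, if t ≤ r then μ r ω else 0) ∂P := by
    intro hQP hψlt A hA
    calc ∫ ω in A, (∑ r, if t ≤ r then ψ r ω else 0) ∂Q
        = ∫ ω in A, (1 - ∑ r, if r < t then μ r ω else 0) ∂Q :=
          integral_congr_ae (ae_restrict_of_ae (e1 t hψlt))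
      _ = ∫ ω in A, (1 - ∑ r, if r < t then μ r ω else 0) ∂P :=
          aux_setIntegral_eq (hFle t) hQP (measG t) hA
      _ = ∫ ω in A, (∑ r, if t ≤ r then μ r ω else 0) ∂P :=
          (integral_congr_ae (ae_restrict_of_ae (e2 t))).symm
  ---- optional-space computations
  letI : MeasurableSpace (Ω × Fin (T+1)) := optSigma T F
  have pre_at : ∀ (r s : Fin (T+1)) (A : Set Ω),
      (fun ω => (ω, r)) ⁻¹' (A ×ˢ ({s} : Set (Fin (T+1)))) = if r = s then A else ∅ := by
    intro r s A
    by_cases h : r = s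
    · subst h
      rw [if_pos rfl]
      ext ω
      simp only [Set.mem_preimage]
      exact ⟨fun hc => hc.1, fun hω => ⟨hω, rfl⟩⟩
    · rw [if_neg h]
      ext ω
      simp only [Set.mem_preimage, Set.mem_empty_iff_false, iff_false]
      exact fun hc => h hc.2
  have pre_tail : ∀ (r : Fin (T+1)) (A : Set Ω),
      (fun ω => (ω, r)) ⁻¹' (A ×ˢ Set.Ici t) = if t ≤ r then A else ∅ := by
    intro r A; ext ω; by_cases h : t ≤ r <;> simp [Set.mem_Ici, h]
  have mapMeas : ∀ r : Fin (T+1),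
      @Measurable Ω (Ω × Fin (T+1)) m0 (optSigma T F) (fun ω => (ω, r)) := by
    intro r
    refine measurable_generateFrom ?_
    rintro S ⟨s, A, hA, rfl⟩
    rw [pre_at r s A]; split_ifs
    exacts [hFle s A hA, MeasurableSet.empty]
  have genAt : ∀ (s : Fin (T+1)) (A : Set Ω), MeasurableSet[F s] A →
      MeasurableSet[optSigma T F] (A ×ˢ ({s} : Set (Fin (T+1)))) :=
    fun s A hA => MeasurableSpace.measurableSet_generateFrom ⟨s, A, hA, rfl⟩
  have genTail : ∀ (A : Set Ω), MeasurableSet[F t] A →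
      MeasurableSet[optSigma T F] (A ×ˢ Set.Ici t) := by
    intro A hA
    have hrw : A ×ˢ Set.Ici t
        = ⋃ (r : Fin (T+1)) (_ : t ≤ r), A ×ˢ ({r} : Set (Fin (T+1))) := by
      ext ⟨ω, r⟩
      simp only [Set.mem_prod, Set.mem_Ici, Set.mem_iUnion, Set.mem_singleton_iff]
      constructor
      · rintro ⟨h1, h2⟩; exact ⟨r, h2, h1, rfl⟩
      · rintro ⟨r', hr', h1, rfl⟩; exact ⟨h1, hr'⟩
    rw [hrw]
    exact MeasurableSet.iUnion fun r => MeasurableSet.iUnion fun hr =>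
      genAt r A (hFmono hr A hA)
  -- Qb on generators
  have qb_at : ∀ (s : Fin (T+1)) (A : Set Ω), MeasurableSet[F s] A →
      (Qb (A ×ˢ ({s} : Set (Fin (T+1))))).toReal = ∫ ω in A, ψ s ω ∂Q := by
    intro s A hA
    have hS := genAt s A hA
    have h0 := hdecomp ((A ×ˢ ({s} : Set (Fin (T+1)))).indicator 1)
      (measurable_one.indicator hS)
      ⟨1, fun x => by
        by_cases h : x ∈ A ×ˢ ({s} : Set (Fin (T+1)))
        · rw [Set.indicator_of_mem h]; simp
        · rw [Set.indicator_of_notMem h]; simp⟩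
    rw [integral_indicator_one hS] at h0
    rw [← measureReal_def, h0, ← integral_indicator (hFle s A hA)]
    refine integral_congr_ae (Filter.Eventually.of_forall fun ω => ?_)
    show (∑ r, ψ r ω * (A ×ˢ ({s} : Set (Fin (T+1)))).indicator 1 (ω, r))
        = A.indicator (ψ s) ω
    have hsum : (∑ r, ψ r ω * (A ×ˢ ({s} : Set (Fin (T+1)))).indicator 1 (ω, r))
        = ψ s ω * (A ×ˢ ({s} : Set (Fin (T+1)))).indicator 1 (ω, s) := by
      refine Finset.sum_eq_single_of_mem s (Finset.mem_univ s) (fun r _ hr => ?_)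
      rw [Set.indicator_of_notMem
        (fun hc : (ω, r) ∈ A ×ˢ ({s} : Set (Fin (T+1))) => hr hc.2), mul_zero]
    rw [hsum]
    by_cases h : ω ∈ A
    · rw [Set.indicator_of_mem (show (ω, s) ∈ A ×ˢ ({s} : Set (Fin (T+1))) from ⟨h, rfl⟩),
        Set.indicator_of_mem h,
        Pi.one_apply, mul_one]
    · rw [Set.indicator_of_notMem
        (fun hc : (ω, s) ∈ A ×ˢ ({s} : Set (Fin (T+1))) => h hc.1),
        Set.indicator_of_notMem h, mul_zero]
  have qb_tail : ∀ (A : Set Ω), MeasurableSet[F t] A →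
      (Qb (A ×ˢ Set.Ici t)).toReal
        = ∫ ω in A, (∑ r, if t ≤ r then ψ r ω else 0) ∂Q := by
    intro A hA
    have hS := genTail A hA
    have h0 := hdecomp ((A ×ˢ Set.Ici t).indicator 1) (measurable_one.indicator hS)
      ⟨1, fun x => by
        by_cases h : x ∈ A ×ˢ Set.Ici t
        · rw [Set.indicator_of_mem h]; simp
        · rw [Set.indicator_of_notMem h]; simp⟩
    rw [integral_indicator_one hS] at h0
    rw [← measureReal_def, h0, ← integral_indicator (hFle t A hA)]
    refine integral_congr_ae (Filter.Eventually.of_forall fun ω => ?_)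
    show (∑ r, ψ r ω * (A ×ˢ Set.Ici t).indicator 1 (ω, r))
        = A.indicator (fun ω' => ∑ r, if t ≤ r then ψ r ω' else 0) ω
    by_cases h : ω ∈ A
    · rw [Set.indicator_of_mem h]
      refine Finset.sum_congr rfl fun r _ => ?_
      by_cases hr : t ≤ r
      · rw [if_pos hr, Set.indicator_of_mem (show (ω, r) ∈ A ×ˢ Set.Ici t from ⟨h, hr⟩),
          Pi.one_apply, mul_one]
      · rw [if_neg hr, Set.indicator_of_notMem
          (fun hc : (ω, r) ∈ A ×ˢ Set.Ici t => hr hc.2), mul_zero]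
    · rw [Set.indicator_of_notMem h]
      refine Finset.sum_eq_zero fun r _ => ?_
      rw [Set.indicator_of_notMem (fun hc : (ω, r) ∈ A ×ˢ Set.Ici t => h hc.1), mul_zero]
  -- optMeas on generators
  have pb_apply : ∀ S : Set (Ω × Fin (T+1)), MeasurableSet[optSigma T F] S →
      optMeas T F P μ S
        = ∑ r, (P.withDensity fun ω => ENNReal.ofReal (μ r ω)) ((fun ω => (ω, r)) ⁻¹' S) := by
    intro S hS
    show (∑ r : Fin (T+1), @Measure.map Ω (Ω × Fin (T+1)) m0 (optSigma T F) (fun ω => (ω, r))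
      (P.withDensity fun ω => ENNReal.ofReal (μ r ω))) S = _
    rw [Measure.finset_sum_apply]
    exact Finset.sum_congr rfl fun r _ => Measure.map_apply (mapMeas r) hS
  have wd_val : ∀ (r : Fin (T+1)) (A : Set Ω), MeasurableSet A →
      (P.withDensity fun ω => ENNReal.ofReal (μ r ω)) A
        = ENNReal.ofReal (∫ ω in A, μ r ω ∂P) := by
    intro r A hA
    rw [withDensity_apply _ hA,
      ← ofReal_integral_eq_lintegral_ofReal ((intμP r).integrableOn)
        (ae_restrict_of_ae (hμ0 r))]
  have pb_at : ∀ (s : Fin (T+1)) (A : Set Ω), MeasurableSet[F s] A →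
      optMeas T F P μ (A ×ˢ ({s} : Set (Fin (T+1))))
        = ENNReal.ofReal (∫ ω in A, μ s ω ∂P) := by
    intro s A hA
    rw [pb_apply _ (genAt s A hA)]
    refine (Finset.sum_eq_single s (fun r _ hr => ?_)
      (fun h => absurd (Finset.mem_univ s) h)).trans ?_
    · rw [pre_at r s A, if_neg hr]; exact measure_empty
    · rw [pre_at s s A, if_pos rfl, wd_val s A (hFle s A hA)]
  have pb_tail : ∀ (A : Set Ω), MeasurableSet[F t] A →
      optMeas T F P μ (A ×ˢ Set.Ici t)
        = ENNReal.ofReal (∫ ω in A, (∑ r, if t ≤ r then μ r ω else 0) ∂P) := by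
    intro A hA
    rw [pb_apply _ (genTail A hA)]
    have hterm : ∀ r : Fin (T+1),
        (P.withDensity fun ω => ENNReal.ofReal (μ r ω)) ((fun ω => (ω, r)) ⁻¹' (A ×ˢ Set.Ici t))
          = ENNReal.ofReal (∫ ω in A, (if t ≤ r then μ r ω else 0) ∂P) := by
      intro r
      rw [pre_tail r A]
      by_cases h : t ≤ r
      · rw [if_pos h, wd_val r A (hFle t A hA)]
        congr 1
        exact integral_congr_ae (Filter.Eventually.of_forall fun ω => by simp [h])
      · rw [if_neg h]
        simp [h]
    rw [Finset.sum_congr rfl fun r _ => hterm r,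
      ← ENNReal.ofReal_sum_of_nonneg (fun r _ => integral_nonneg_of_ae
        (ae_restrict_of_ae ((hμ0 r).mono fun ω h' => by
          by_cases h : t ≤ r <;> simp [h, h'])))]
    congr 1
    rw [← integral_finset_sum _
      (fun r _ => (int_ite P inferInstance μ measμ hμ01 _ inferInstance r).integrableOn)]
  -- optMeas is a probability measure
  haveI pbProb : IsProbabilityMeasure (optMeas T F P μ) := by
    constructor
    rw [pb_apply _ MeasurableSet.univ]
    simp only [Set.preimage_univ]
    have hterm : ∀ r : Fin (T+1),
        (P.withDensity fun ω => ENNReal.ofReal (μ r ω)) Set.univ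
          = (P.withDensity fun ω => ENNReal.ofReal (μ r ω)) Set.univ := fun r => rfl
    rw [Finset.sum_congr rfl (fun r _ => by
      rw [withDensity_apply _ MeasurableSet.univ, Measure.restrict_univ]),
      ← lintegral_finset_sum _ (fun r _ => (measμ r).ennreal_ofReal)]
    have hone : ∀ᵐ ω ∂P, (∑ r, ENNReal.ofReal (μ r ω)) = 1 := by
      filter_upwards [hμ01, hμs] with ω h hs
      rw [← ENNReal.ofReal_sum_of_nonneg (fun r _ => (h r).1), hs, ENNReal.ofReal_one]
    rw [lintegral_congr_ae hone, lintegral_one, measure_univ]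
  -- the equivalence
  constructor
  · intro hQb
    have c1 : ∀ s : Fin (T+1), s < t → ∀ A, MeasurableSet[F s] A →
        ∫ ω in A, ψ s ω ∂Q = ∫ ω in A, μ s ω ∂P := by
      intro s hst A hA
      have hmem : MeasurableSet[optFilt T F t] (A ×ˢ ({s} : Set (Fin (T+1)))) :=
        MeasurableSpace.measurableSet_generateFrom (Or.inl ⟨s, hst, A, hA, rfl⟩)
      have h1 := qb_at s A hA
      rw [hQb _ hmem, pb_at s A hA,
        ENNReal.toReal_ofReal (integral_nonneg_of_ae (ae_restrict_of_ae (hμ0 s)))] at h1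
      exact h1.symm
    have c2 : ∀ A, MeasurableSet[F t] A →
        ∫ ω in A, (∑ r, if t ≤ r then ψ r ω else 0) ∂Q
          = ∫ ω in A, (∑ r, if t ≤ r then μ r ω else 0) ∂P := by
      intro A hA
      have hmem : MeasurableSet[optFilt T F t] (A ×ˢ Set.Ici t) :=
        MeasurableSpace.measurableSet_generateFrom (Or.inr ⟨A, hA, rfl⟩)
      have h1 := qb_tail A hA
      rw [hQb _ hmem, pb_tail A hA,
        ENNReal.toReal_ofReal (integral_nonneg_of_ae (ae_restrict_of_ae
          ((hμ01).mono fun ω h => Finset.sum_nonneg fun r _ => by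
            by_cases hc : t ≤ r <;> simp [hc, (h r).1])))] at h1
      exact h1.symm
    exact cond_to_goal T t (Nat.lt_succ_iff.mp t.isLt) c1 (hsplit c1 c2)
  · rintro ⟨hQP, hψeq⟩
    have c1 := goal_to_cond1 hQP hψeq
    have c2 := goal_to_cond2 hQP hψeq
    have h_eq : optFilt T F t = MeasurableSpace.generateFrom
        {S | (∃ r : Fin (T+1), r < t ∧ ∃ A : Set Ω, MeasurableSet[F r] A ∧
            S = A ×ˢ ({r} : Set (Fin (T+1)))) ∨
          (∃ A : Set Ω, MeasurableSet[F t] A ∧ S = A ×ˢ (Set.Ici t))} := rfl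
    have hle_opt : optFilt T F t ≤ optSigma T F := by
      rw [h_eq]
      refine MeasurableSpace.generateFrom_le ?_
      rintro S (⟨r, hrt, A, hA, rfl⟩ | ⟨A, hA, rfl⟩)
      · exact genAt r A hA
      · exact genTail A hA
    have hpi : IsPiSystem {S : Set (Ω × Fin (T+1)) |
        (∃ r : Fin (T+1), r < t ∧ ∃ A : Set Ω, MeasurableSet[F r] A ∧
            S = A ×ˢ ({r} : Set (Fin (T+1)))) ∨
          (∃ A : Set Ω, MeasurableSet[F t] A ∧ S = A ×ˢ (Set.Ici t))} := by
      rintro S1 (⟨r1, hr1, A1, hA1, rfl⟩ | ⟨A1, hA1, rfl⟩)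
        S2 (⟨r2, hr2, A2, hA2, rfl⟩ | ⟨A2, hA2, rfl⟩) hne
      · by_cases h : r1 = r2
        · subst h
          have hrw : A1 ×ˢ ({r1} : Set (Fin (T+1))) ∩ A2 ×ˢ ({r1} : Set (Fin (T+1)))
              = (A1 ∩ A2) ×ˢ ({r1} : Set (Fin (T+1))) := by
            ext x; simp only [Set.mem_inter_iff, Set.mem_prod, Set.mem_singleton_iff]; tauto
          rw [hrw]
          exact Or.inl ⟨r1, hr1, A1 ∩ A2, hA1.inter hA2, rfl⟩
        · obtain ⟨x, hx⟩ := hne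
          exact absurd ((Set.mem_singleton_iff.1 hx.1.2).symm.trans
            (Set.mem_singleton_iff.1 hx.2.2)) h
      · obtain ⟨x, hx⟩ := hne
        have : t ≤ r1 := (Set.mem_singleton_iff.1 hx.1.2) ▸ hx.2.2
        exact absurd this (not_le.2 hr1)
      · obtain ⟨x, hx⟩ := hne
        have : t ≤ r2 := (Set.mem_singleton_iff.1 hx.2.2) ▸ hx.1.2
        exact absurd this (not_le.2 hr2)
      · have hrw : A1 ×ˢ Set.Ici t ∩ A2 ×ˢ Set.Ici t = (A1 ∩ A2) ×ˢ Set.Ici t := by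
          ext x; simp only [Set.mem_inter_iff, Set.mem_prod, Set.mem_Ici]; tauto
        rw [hrw]
        exact Or.inr ⟨A1 ∩ A2, hA1.inter hA2, rfl⟩
    have hbasic : ∀ S ∈ {S : Set (Ω × Fin (T+1)) |
        (∃ r : Fin (T+1), r < t ∧ ∃ A : Set Ω, MeasurableSet[F r] A ∧
            S = A ×ˢ ({r} : Set (Fin (T+1)))) ∨
          (∃ A : Set Ω, MeasurableSet[F t] A ∧ S = A ×ˢ (Set.Ici t))},
        Qb S = optMeas T F P μ S := by
      rintro S (⟨r, hrt, A, hA, rfl⟩ | ⟨A, hA, rfl⟩)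
      · refine (ENNReal.toReal_eq_toReal_iff' (measure_ne_top Qb _) (measure_ne_top _ _)).1 ?_
        rw [qb_at r A hA, pb_at r A hA,
          ENNReal.toReal_ofReal (integral_nonneg_of_ae (ae_restrict_of_ae (hμ0 r)))]
        exact c1 r hrt A hA
      · refine (ENNReal.toReal_eq_toReal_iff' (measure_ne_top Qb _) (measure_ne_top _ _)).1 ?_
        rw [qb_tail A hA, pb_tail A hA,
          ENNReal.toReal_ofReal (integral_nonneg_of_ae (ae_restrict_of_ae
            ((hμ01).mono fun ω h => Finset.sum_nonneg fun r _ => by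
              by_cases hc : t ≤ r <;> simp [hc, (h r).1])))]
        exact c2 A hA
    intro S hS
    refine MeasurableSpace.induction_on_inter (m := optFilt T F t)
      (C := fun S _ => Qb S = optMeas T F P μ S) h_eq hpi ?_ hbasic ?_ ?_ S hS
    · simp
    · intro u hu hC
      have huσ : MeasurableSet[optSigma T F] u := hle_opt u hu
      rw [measure_compl huσ (measure_ne_top _ _), measure_compl huσ (measure_ne_top _ _),
        hC, measure_univ, measure_univ]
    · intro f hdisj hmeas hC
      rw [measure_iUnion hdisj (fun i => hle_opt _ (hmeas i)),
        measure_iUnion hdisj (fun i => hle_opt _ (hmeas i))]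
      exact tsum_congr hC
end
end

section
/- Fix t∈𝕋 and let (X^n)_{n∈N} be a net in L̄^∞(ℝ^d) such that X^n_s→X_s in σ(L^∞_s(ℝ^d),L^1_s(ℝ^d)) for every s<t and X^n 1_{𝕋_t}→X 1_{𝕋_t} in σ(R^{∞,d}_t,A^{1,d}_t). Then X^n→X in σ(L̄^∞(ℝ^d),L̄^1(ℝ^d)), i.e., Ē[Y^⊤X^n]→Ē[Y^⊤X] for all Y∈L̄^1(ℝ^d). -/
open MeasureTheory Finset Pointwise Filter

noncomputable section

section AuxWeakConv

open RMPaper MeasureTheory Finset Filter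
open scoped ENNReal NNReal

lemma meas_eval {α : Type*} {mα : MeasurableSpace α} {d : ℕ} {g : α → Fin d → ℝ}
    (hg : Measurable[mα] g) (i : Fin d) : Measurable[mα] fun ω => g ω i := by
  letI := mα; exact hg.eval

lemma meas_pi {α : Type*} {mα : MeasurableSpace α} {d : ℕ} {g : α → Fin d → ℝ}
    (h : ∀ i, Measurable[mα] fun ω => g ω i) : Measurable[mα] g := by
  letI := mα; exact measurable_pi_lambda _ h

variable {Ω : Type} [m0 : MeasurableSpace Ω] {T : ℕ} {F : Fin (T+1) → MeasurableSpace Ω}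

lemma measurable_pairConst (s : Fin (T+1)) :
    @Measurable Ω (Ω × Fin (T+1)) (F s) (optSigma T F) (fun ω => (ω, s)) := by
  unfold optSigma
  refine @measurable_generateFrom Ω (Ω × Fin (T+1)) (F s) _ _ ?_
  rintro S ⟨r, A, hA, rfl⟩
  by_cases h : s = r
  · subst h
    have he : ((fun ω : Ω => (ω, s)) ⁻¹' (A ×ˢ ({s} : Set (Fin (T+1))))) = A := by
      ext ω; simp
    rw [he]; exact hA
  · have he : ((fun ω : Ω => (ω, s)) ⁻¹' (A ×ˢ ({r} : Set (Fin (T+1))))) = ∅ := by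
      ext ω
      simp only [Set.mem_preimage, Set.mem_prod, Set.mem_singleton_iff,
        Set.mem_empty_iff_false, iff_false, not_and]
      exact fun _ hc => h hc
    rw [he]; exact @MeasurableSet.empty _ (F s)

lemma optMeas_eq_sum (P : Measure Ω) (μ : Fin (T+1) → Ω → ℝ) :
    optMeas T F P μ = ∑ s : Fin (T+1),
      @Measure.map Ω (Ω × Fin (T+1)) m0 (optSigma T F) (fun ω => (ω, s))
        (P.withDensity fun ω => ENNReal.ofReal (μ s ω)) := rfl

lemma integrable_smul_slice (P : Measure Ω) (μ : Fin (T+1) → Ω → ℝ)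
    (hμ : ∀ s, Measurable[F s] (μ s)) (hFle : ∀ r, F r ≤ m0)
    (g : Ω × Fin (T+1) → ℝ) (hgm : Measurable[optSigma T F] g) (s : Fin (T+1)) :
    Integrable g
      (@Measure.map Ω (Ω × Fin (T+1)) m0 (optSigma T F) (fun ω => (ω, s))
        (P.withDensity fun ω => ENNReal.ofReal (μ s ω))) ↔
    Integrable (fun ω => max (μ s ω) 0 * g (ω, s)) P := by
  letI : MeasurableSpace (Ω × Fin (T+1)) := optSigma T F
  have hφ : @Measurable Ω (Ω × Fin (T+1)) m0 (optSigma T F) (fun ω => (ω, s)) :=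
    (measurable_pairConst (F := F) s).mono (hFle s) le_rfl
  have hd : Measurable fun ω => (μ s ω).toNNReal :=
    (((hμ s).mono (hFle s) le_rfl)).real_toNNReal
  have hsm : AEStronglyMeasurable g
      (@Measure.map Ω (Ω × Fin (T+1)) m0 (optSigma T F) (fun ω => (ω, s))
        (P.withDensity fun ω => ENNReal.ofReal (μ s ω))) :=
    hgm.aestronglyMeasurable
  rw [integrable_map_measure hsm hφ.aemeasurable]
  have hde : (fun ω => ENNReal.ofReal (μ s ω)) = fun ω => ((μ s ω).toNNReal : ℝ≥0∞) := rfl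
  rw [hde, integrable_withDensity_iff_integrable_smul hd]
  refine integrable_congr (Filter.Eventually.of_forall fun ω => ?_)
  simp [NNReal.smul_def, Real.coe_toNNReal', Function.comp]

lemma integral_optMeas (P : Measure Ω) (μ : Fin (T+1) → Ω → ℝ)
    (hμ : ∀ s, Measurable[F s] (μ s)) (hFle : ∀ r, F r ≤ m0)
    (f : Ω × Fin (T+1) → ℝ) (hfm : Measurable[optSigma T F] f)
    (hfi : ∀ s, Integrable (fun ω => max (μ s ω) 0 * f (ω, s)) P) :
    ∫ x, f x ∂(optMeas T F P μ) = ∑ s : Fin (T+1), ∫ ω, max (μ s ω) 0 * f (ω, s) ∂P := by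
  letI : MeasurableSpace (Ω × Fin (T+1)) := optSigma T F
  rw [optMeas_eq_sum,
    integral_finset_sum_measure (fun s _ =>
      (integrable_smul_slice P μ hμ hFle f hfm s).2 (hfi s))]
  refine Finset.sum_congr rfl fun s _ => ?_
  have hφ : @Measurable Ω (Ω × Fin (T+1)) m0 (optSigma T F) (fun ω => (ω, s)) :=
    (measurable_pairConst (F := F) s).mono (hFle s) le_rfl
  have hd : Measurable fun ω => (μ s ω).toNNReal :=
    (((hμ s).mono (hFle s) le_rfl)).real_toNNReal
  have hsm : AEStronglyMeasurable f
      (@Measure.map Ω (Ω × Fin (T+1)) m0 (optSigma T F) (fun ω => (ω, s))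
        (P.withDensity fun ω => ENNReal.ofReal (μ s ω))) :=
    hfm.aestronglyMeasurable
  rw [integral_map hφ.aemeasurable hsm]
  have hde : (fun ω => ENNReal.ofReal (μ s ω)) = fun ω => ((μ s ω).toNNReal : ℝ≥0∞) := rfl
  rw [hde, integral_withDensity_eq_integral_smul hd]
  refine integral_congr_ae (Filter.Eventually.of_forall fun ω => ?_)
  simp [NNReal.smul_def, Real.coe_toNNReal']

end AuxWeakConv

open RMPaper MeasureTheory Finset Pointwise Filter in
/-- Lemma 3.6(2): if, for a fixed `t`, a net satisfies `X^n_s → X_s` in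
`σ(L^∞_s, L^1_s)` for all `s < t` and `X^n 1_{𝕋_t} → X 1_{𝕋_t}` in
`σ(R^{∞,d}_t, A^{1,d}_t)`, then `X^n → X` in `σ(L̄^∞(ℝ^d), L̄^1(ℝ^d))`. -/
theorem weak_convergence_components_to_optional
    {Ω : Type} [m0 : MeasurableSpace Ω] (P : Measure Ω) [IsProbabilityMeasure P]
    (T : ℕ) (F : Fin (T+1) → MeasurableSpace Ω)
    (hFmono : Monotone F) (hFle : ∀ r, F r ≤ m0) (hFT : F (Fin.last T) = m0)
    (hF0 : ∀ A : Set Ω, MeasurableSet[F 0] A → P A = 0 ∨ P A = 1)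
    (μ : Fin (T+1) → Ω → ℝ) (hμa : ∀ r, Measurable[F r] (μ r))
    (hμs : ∀ᵐ ω ∂P, ∑ r, μ r ω = 1)
    (hμp : ∃ ε > 0, ∀ᵐ ω ∂P, ∀ r, ε < μ r ω)
    (d : ℕ) (t : Fin (T+1))
    {ι : Type} (l : Filter ι) [l.NeBot]
    (Xn : ι → Ω × Fin (T+1) → Fin d → ℝ) (X : Ω × Fin (T+1) → Fin d → ℝ)
    (hXn : ∀ n, Xn n ∈ Linf (optSigma T F) d) (hX : X ∈ Linf (optSigma T F) d)
    (hconv1 : ∀ s : Fin (T+1), s < t → ∀ Z ∈ L1t (F s) P d,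
      Tendsto (fun n => ∫ ω, ∑ i, Z ω i * Xn n (ω, s) i ∂P) l
        (nhds (∫ ω, ∑ i, Z ω i * X (ω, s) i ∂P)))
    (hconv2 : ∀ a ∈ A1t T F P d t,
      Tendsto (fun n => ∫ ω, ∑ s ∈ Ici t, ∑ i, dlt T a s ω i * Xn n (ω, s) i ∂P) l
        (nhds (∫ ω, ∑ s ∈ Ici t, ∑ i, dlt T a s ω i * X (ω, s) i ∂P))) :
    ∀ Y ∈ L1t (optSigma T F) (optMeas T F P μ) d,
      Tendsto (fun n => ∫ x, ∑ i, Y x i * Xn n x i ∂(optMeas T F P μ)) l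
        (nhds (∫ x, ∑ i, Y x i * X x i ∂(optMeas T F P μ))) := by
  intro Y hY
  obtain ⟨hYm, hYi⟩ := hY
  -- slices of measurable functions on the optional space are measurable
  have hslice : ∀ (g : Ω × Fin (T+1) → Fin d → ℝ), Measurable[optSigma T F] g →
      ∀ s : Fin (T+1), Measurable[F s] (fun ω => g (ω, s)) :=
    fun g hg s => hg.comp (measurable_pairConst (F := F) s)
  -- the time-`s` component pairings
  set Z : Fin (T+1) → Ω → Fin d → ℝ := fun s ω i => max (μ s ω) 0 * Y (ω, s) i with hZdef
  have hZm : ∀ s, Measurable[F s] (Z s) := by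
    intro s
    refine meas_pi fun i => ?_
    exact ((hμa s).max measurable_const).mul (meas_eval (hslice Y hYm s) i)
  have hZi : ∀ s i, Integrable (fun ω => Z s ω i) P := by
    intro s i
    have h1 : Integrable (fun x => Y x i) (optMeas T F P μ) := hYi i
    rw [optMeas_eq_sum, integrable_finset_sum_measure] at h1
    exact (integrable_smul_slice P μ hμa hFle (fun x => Y x i) (meas_eval hYm i) s).1
      (h1 s (Finset.mem_univ s))
  -- integrability of component pairings against bounded measurable processes
  have hint : ∀ (W : Ω × Fin (T+1) → Fin d → ℝ), W ∈ Linf (optSigma T F) d →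
      ∀ s, Integrable (fun ω => ∑ i, Z s ω i * W (ω, s) i) P := by
    rintro W ⟨hWm, C, hC⟩ s
    refine integrable_finset_sum _ fun i _ => ?_
    have hWs : AEStronglyMeasurable (fun ω => W (ω, s) i) P :=
      (meas_eval ((hslice W hWm s).mono (hFle s) le_rfl) i).aestronglyMeasurable
    have := (hZi s i).bdd_mul hWs (c := C) (Filter.Eventually.of_forall fun ω => by
      simpa [Real.norm_eq_abs] using hC (ω, s) i)
    exact this.congr (Filter.Eventually.of_forall fun ω => mul_comm _ _)
  -- the basic decomposition of the optional integral
  have hdis : Disjoint (Iio t) (Ici t : Finset (Fin (T+1))) := by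
    rw [Finset.disjoint_left]
    intro r hr hr'
    exact absurd (Finset.mem_Ici.mp hr') (not_le.mpr (Finset.mem_Iio.mp hr))
  have huniv : (Iio t) ∪ (Ici t : Finset (Fin (T+1))) = Finset.univ := by
    ext r; simp [lt_or_ge r t]
  have key : ∀ (W : Ω × Fin (T+1) → Fin d → ℝ), W ∈ Linf (optSigma T F) d →
      ∫ x, ∑ i, Y x i * W x i ∂(optMeas T F P μ)
        = (∑ s ∈ Iio t, ∫ ω, ∑ i, Z s ω i * W (ω, s) i ∂P)
          + ∫ ω, ∑ s ∈ Ici t, ∑ i, Z s ω i * W (ω, s) i ∂P := by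
    intro W hW
    obtain ⟨hWm, C, hC⟩ := hW
    have hm : Measurable[optSigma T F] (fun x => ∑ i, Y x i * W x i) :=
      Finset.measurable_sum _ fun i _ => (meas_eval hYm i).mul (meas_eval hWm i)
    have heq : ∀ s, (fun ω => max (μ s ω) 0 * ∑ i, Y (ω, s) i * W (ω, s) i)
        = fun ω => ∑ i, Z s ω i * W (ω, s) i := by
      intro s
      funext ω
      rw [Finset.mul_sum]
      exact Finset.sum_congr rfl fun i _ => (mul_assoc _ _ _).symm
    have hfi : ∀ s, Integrable
        (fun ω => max (μ s ω) 0 * ∑ i, Y (ω, s) i * W (ω, s) i) P := by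
      intro s
      rw [heq s]
      exact hint W ⟨hWm, C, hC⟩ s
    rw [integral_optMeas P μ hμa hFle _ hm hfi]
    have h2 : ∀ s : Fin (T+1), ∫ ω, max (μ s ω) 0 * ∑ i, Y (ω, s) i * W (ω, s) i ∂P
        = ∫ ω, ∑ i, Z s ω i * W (ω, s) i ∂P := fun s => by rw [heq s]
    calc ∑ s : Fin (T+1), ∫ ω, max (μ s ω) 0 * ∑ i, Y (ω, s) i * W (ω, s) i ∂P
        = ∑ s : Fin (T+1), ∫ ω, ∑ i, Z s ω i * W (ω, s) i ∂P :=
          Finset.sum_congr rfl fun s _ => h2 s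
      _ = (∑ s ∈ Iio t, ∫ ω, ∑ i, Z s ω i * W (ω, s) i ∂P)
          + ∑ s ∈ Ici t, ∫ ω, ∑ i, Z s ω i * W (ω, s) i ∂P := by
          rw [← Finset.sum_union hdis, huniv]
      _ = (∑ s ∈ Iio t, ∫ ω, ∑ i, Z s ω i * W (ω, s) i ∂P)
          + ∫ ω, ∑ s ∈ Ici t, ∑ i, Z s ω i * W (ω, s) i ∂P := by
          rw [integral_finset_sum _ fun s _ => hint W ⟨hWm, C, hC⟩ s]
  -- the test process for the tail part
  set a : Fin (T+1) → Ω → Fin d → ℝ := fun s ω i => ∑ r ∈ Icc t s, Z r ω i with hadef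
  have hIcc : ∀ s : Fin (T+1), s ≠ 0 → Icc t (s - 1) = Ico t s := by
    intro s hs
    have hv : 0 < (s : ℕ) := by
      rcases Nat.eq_zero_or_pos (s : ℕ) with h | h
      · exact absurd (Fin.val_injective (h.trans (Fin.val_zero _).symm)) hs
      · exact h
    ext r
    simp only [Finset.mem_Icc, Finset.mem_Ico, and_congr_right_iff]
    intro _
    rw [Fin.le_def, Fin.lt_def, Fin.coe_sub_one, if_neg hs]
    omega
  have hdlt : ∀ (s : Fin (T+1)) (ω : Ω) (i : Fin d),
      dlt T a s ω i = if t ≤ s then Z s ω i else 0 := by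
    intro s ω i
    simp only [dlt]
    by_cases h0 : s = 0
    · subst h0
      rw [if_pos rfl, sub_zero]
      by_cases ht : t ≤ 0
      · have ht0 : t = 0 := le_antisymm ht (Fin.zero_le t)
        rw [if_pos ht, hadef]
        subst ht0
        simp
      · rw [if_neg ht, hadef]
        simp [Finset.Icc_eq_empty ht]
    · rw [if_neg h0]
      by_cases ht : t ≤ s
      · rw [if_pos ht]
        show (∑ r ∈ Icc t s, Z r ω i) - ∑ r ∈ Icc t (s - 1), Z r ω i = Z s ω i
        rw [hIcc s h0, ← Finset.Ico_insert_right ht,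
          Finset.sum_insert Finset.right_notMem_Ico]
        exact add_sub_cancel_right _ _
      · rw [if_neg ht]
        show (∑ r ∈ Icc t s, Z r ω i) - ∑ r ∈ Icc t (s - 1), Z r ω i = 0
        rw [hIcc s h0, Finset.Icc_eq_empty ht,
          Finset.Ico_eq_empty (fun h => ht h.le)]
        simp
  have haA : a ∈ A1t T F P d t := by
    refine ⟨?_, ?_, ?_⟩
    · intro s
      refine meas_pi fun i => ?_
      refine Finset.measurable_sum _ fun r hr => ?_
      exact meas_eval ((hZm r).mono (hFmono (Finset.mem_Icc.mp hr).2) le_rfl) i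
    · intro s hs
      funext ω i
      simp [hadef, Finset.Icc_eq_empty (not_le.mpr hs)]
    · intro s i
      have : (fun ω => dlt T a s ω i) = fun ω => if t ≤ s then Z s ω i else 0 := by
        funext ω; exact hdlt s ω i
      rw [this]
      by_cases ht : t ≤ s
      · simp only [if_pos ht]; exact hZi s i
      · simp only [if_neg ht]; exact integrable_const 0
  -- rewrite the tail integrals
  have hIeq : ∀ (W : Ω × Fin (T+1) → Fin d → ℝ),
      ∫ ω, ∑ s ∈ Ici t, ∑ i, dlt T a s ω i * W (ω, s) i ∂P
        = ∫ ω, ∑ s ∈ Ici t, ∑ i, Z s ω i * W (ω, s) i ∂P := by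
    intro W
    refine integral_congr_ae (Filter.Eventually.of_forall fun ω => ?_)
    refine Finset.sum_congr rfl fun s hs => Finset.sum_congr rfl fun i _ => ?_
    rw [hdlt s ω i, if_pos (Finset.mem_Ici.mp hs)]
  have h2 : Tendsto (fun n => ∫ ω, ∑ s ∈ Ici t, ∑ i, Z s ω i * Xn n (ω, s) i ∂P) l
      (nhds (∫ ω, ∑ s ∈ Ici t, ∑ i, Z s ω i * X (ω, s) i ∂P)) := by
    have h := hconv2 a haA
    rw [hIeq X] at h
    exact h.congr fun n => hIeq (Xn n)
  have h1 : Tendsto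
      (fun n => ∑ s ∈ Iio t, ∫ ω, ∑ i, Z s ω i * Xn n (ω, s) i ∂P) l
      (nhds (∑ s ∈ Iio t, ∫ ω, ∑ i, Z s ω i * X (ω, s) i ∂P)) := by
    refine tendsto_finset_sum _ fun s hs => ?_
    exact hconv1 s (Finset.mem_Iio.mp hs) (Z s) ⟨hZm s, hZi s⟩
  rw [key X hX]
  exact (h1.add h2).congr fun n => (key (Xn n) (hXn n)).symm
end
end
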